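/- arXiv:math/0311117 — 5 statements merged into one kernel-verified Lean document; each statement's English description precedes it below -/
import Mathlib

section
/- Let k be an algebraically closed field, let A be an m₁×m₁ matrix over k with characteristic polynomial ∏ᵢ (t − αᵢ), and let B be an m₂×m₂ matrix over k with characteristic polynomial ∏ⱼ (t − βⱼ). Then the k-linear endomorphism P_{A,B} : X ↦ X·B − A·X of the space of m₁×m₂ matrices over k has characteristic polynomial ∏_{i,j} (t − βⱼ + αᵢ). In particular, if A and B have no common eigenvalue, then P_{A,B} is bijective. -/
/-!
Conjugating `A` and `B` by invertible matrices `P` and `Q` conjugates `X ↦ X·B − A·X` by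
`X ↦ P⁻¹·X·Q`, and over an algebraically closed field this makes both upper triangular. Ordering
the matrix units `E_{ij}` by `j` decreasing, then `i` increasing, `E_{ij}·B − A·E_{ij}` only
involves `E_{pq}` at or after `E_{ij}`, with coefficient `B_{jj} − A_{ii}` on `E_{ij}` itself; so
the map is triangular, and its diagonal runs through the `βⱼ − αᵢ`.
-/

open Polynomial

/-- The Sylvester-type linear map `X ↦ X·B − A·X` on the space of `m₁ × m₂` matrices. -/
def sylvLMap (R : Type*) [CommRing R] (m₁ m₂ : ℕ)
    (A : Matrix (Fin m₁) (Fin m₁) R) (B : Matrix (Fin m₂) (Fin m₂) R) :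
    Matrix (Fin m₁) (Fin m₂) R →ₗ[R] Matrix (Fin m₁) (Fin m₂) R where
  toFun X := X * B - A * X
  map_add' X Y := by
    simp only [Matrix.add_mul, Matrix.mul_add]
    abel
  map_smul' c X := by
    simp only [Matrix.smul_mul, Matrix.mul_smul, smul_sub, RingHom.id_apply]

open Module Matrix

namespace Module.End

variable {K V : Type*} [Field K] [AddCommGroup V] [Module K V]

/-- Any hyperplane containing the range of `f - μ`, for an eigenvalue `μ`, is `f`-invariant. -/
theorem exists_dual_ne_zero_mapsTo_ker [IsAlgClosed K] [FiniteDimensional K V] [Nontrivial V]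
    (f : End K V) : ∃ φ : Dual K V, φ ≠ 0 ∧ ∀ x ∈ LinearMap.ker φ, f x ∈ LinearMap.ker φ := by
  obtain ⟨μ, hμ⟩ := exists_eigenvalue f
  rw [hasEigenvalue_iff, eigenspace_def] at hμ
  have hrange : LinearMap.range (f - μ • 1) < ⊤ := lt_top_iff_ne_top.mpr fun h =>
    hμ <| LinearMap.ker_eq_bot.mpr <|
      LinearMap.injective_iff_surjective.mpr (LinearMap.range_eq_top.mp h)
  obtain ⟨φ, hφ, hle⟩ := (LinearMap.range (f - μ • 1)).exists_le_ker_of_lt_top hrange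
  refine ⟨φ, hφ, fun x hx => ?_⟩
  have hfx : f x = (f - μ • 1) x + μ • x := by simp
  rw [hfx]
  exact add_mem (hle (LinearMap.mem_range_self _ x)) (Submodule.smul_mem _ μ hx)

theorem exists_basis_apply_mem_span_Iic [IsAlgClosed K] (n : ℕ) [FiniteDimensional K V]
    (hn : finrank K V = n) (f : End K V) :
    ∃ b : Basis (Fin n) K V, ∀ j, f (b j) ∈ Submodule.span K (b '' Set.Iic j) := by
  induction n generalizing V with
  | zero => exact ⟨finBasisOfFinrankEq K V hn, fun j => j.elim0⟩
  | succ n ih =>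
    have : Nontrivial V := Module.nontrivial_of_finrank_eq_succ hn
    obtain ⟨φ, hφ, hf⟩ := exists_dual_ne_zero_mapsTo_ker f
    obtain ⟨y, hy⟩ := φ.surjective hφ 1
    obtain ⟨c, hc⟩ := ih (by have := Module.Dual.finrank_ker_add_one_of_ne_zero hφ; omega)
      (f.restrict hf)
    let b := Basis.mkFinSnoc c y
      (fun a x hx h => by simpa [hy, LinearMap.mem_ker.mp hx] using congr_arg φ h)
      (fun z => ⟨-φ z, by simp [hy]⟩)
    have hb : ⇑b = Fin.snoc (Subtype.val ∘ c) y := Basis.coe_mkFinSnoc ..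
    refine ⟨b, Fin.lastCases ?_ fun j => ?_⟩
    · rw [← Fin.top_eq_last, Set.Iic_top, Set.image_univ, b.span_eq]
      exact Submodule.mem_top
    · have hcomp : (LinearMap.ker φ).subtype ∘ c = b ∘ Fin.castSucc := by
        ext i
        simp [hb]
      have hmap := Submodule.mem_map_of_mem (f := (LinearMap.ker φ).subtype) (hc j)
      rw [Submodule.map_span, ← Set.image_comp, hcomp, Set.image_comp] at hmap
      have hle : Fin.castSucc '' Set.Iic j ⊆ Set.Iic j.castSucc :=
        Set.image_subset_iff.mpr fun i hi => Fin.castSucc_le_castSucc_iff.mpr hi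
      have hbj : b j.castSucc = c j := by simp [hb]
      rw [hbj]
      exact Submodule.span_mono (Set.image_mono hle) hmap

end Module.End

theorem Matrix.exists_units_conj_isUpperTriangular {K : Type*} [Field K] [IsAlgClosed K] {n : ℕ}
    (M : Matrix (Fin n) (Fin n) K) :
    ∃ P : (Matrix (Fin n) (Fin n) K)ˣ, (P⁻¹.val * M * P.val).IsUpperTriangular := by
  obtain ⟨b, hb⟩ := Module.End.exists_basis_apply_mem_span_Iic n (finrank_fin_fun K) (toLin' M)
  let P : (Matrix (Fin n) (Fin n) K)ˣ :=
    ⟨(Pi.basisFun K (Fin n)).toMatrix b, b.toMatrix (Pi.basisFun K (Fin n)),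
      Basis.toMatrix_mul_toMatrix_flip _ _, Basis.toMatrix_mul_toMatrix_flip _ _⟩
  have hP : P⁻¹.val * M * P.val = LinearMap.toMatrix b b (toLin' M) := by
    rw [← basis_toMatrix_mul_linearMap_toMatrix_mul_basis_toMatrix (b := b) (c := b)
      (b' := Pi.basisFun K (Fin n)) (c' := Pi.basisFun K (Fin n)),
      LinearMap.toMatrix_eq_toMatrix', LinearMap.toMatrix'_toLin']
    rfl
  refine ⟨P, fun i j hji => ?_⟩
  rw [hP, LinearMap.toMatrix_apply]
  exact Finsupp.notMem_support_iff.mp fun hi => not_le.mpr hji (b.mem_span_image.mp (hb j) hi)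

theorem Matrix.stdBasis_repr_apply {R m n : Type*} [Semiring R] [Fintype m] [Finite n]
    (X : Matrix m n R) (i : m) (j : n) : (stdBasis R m n).repr X (i, j) = X i j := by
  simp [stdBasis]

namespace Polynomial

variable {R : Type*} [CommRing R] [IsDomain R]

theorem roots_prod_univ_X_sub_C {ι : Type*} [Fintype ι] (a : ι → R) :
    (∏ i, (X - C (a i))).roots = Finset.univ.val.map a := by
  rw [Finset.prod_eq_multiset_prod, ← roots_multiset_prod_X_sub_C (Finset.univ.val.map a),
    Multiset.map_map]
  rfl

theorem prod_eq_prod_of_prod_X_sub_C_eq {ι κ M : Type*} [Fintype ι] [Fintype κ] [CommMonoid M]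
    {a : ι → R} {c : κ → R} (h : ∏ i, (X - C (a i)) = ∏ i, (X - C (c i))) (g : R → M) :
    ∏ i, g (a i) = ∏ i, g (c i) := by
  have hroots := congrArg roots h
  rw [roots_prod_univ_X_sub_C, roots_prod_univ_X_sub_C] at hroots
  calc ∏ i, g (a i) = ((Finset.univ.val.map a).map g).prod := by rw [Multiset.map_map]; rfl
    _ = ∏ i, g (c i) := by rw [hroots, Multiset.map_map]; rfl

end Polynomial

section Sylvester

variable {R : Type*} [CommRing R] {m₁ m₂ : ℕ}

theorem charpoly_sylvLMap_units_conj (A : Matrix (Fin m₁) (Fin m₁) R)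
    (B : Matrix (Fin m₂) (Fin m₂) R) (P : (Matrix (Fin m₁) (Fin m₁) R)ˣ)
    (Q : (Matrix (Fin m₂) (Fin m₂) R)ˣ) :
    (sylvLMap R m₁ m₂ (P⁻¹.val * A * P.val) (Q⁻¹.val * B * Q.val)).charpoly =
      (sylvLMap R m₁ m₂ A B).charpoly := by
  let e : Matrix (Fin m₁) (Fin m₂) R ≃ₗ[R] Matrix (Fin m₁) (Fin m₂) R :=
    { toFun X := P⁻¹.val * X * Q.val
      invFun X := P.val * X * Q⁻¹.val
      map_add' X Y := by rw [Matrix.mul_add, Matrix.add_mul]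
      map_smul' c X := by rw [Matrix.mul_smul, Matrix.smul_mul, RingHom.id_apply]
      left_inv X := by simp [Matrix.mul_assoc]
      right_inv X := by simp [Matrix.mul_assoc] }
  have he : e.conj (sylvLMap R m₁ m₂ A B) =
      sylvLMap R m₁ m₂ (P⁻¹.val * A * P.val) (Q⁻¹.val * B * Q.val) := by
    ext X : 1
    simp [e, LinearEquiv.conj_apply, sylvLMap, Matrix.mul_sub, Matrix.sub_mul, Matrix.mul_assoc]
  rw [← he, LinearEquiv.charpoly_conj]

theorem toMatrix_sylvLMap_apply (A : Matrix (Fin m₁) (Fin m₁) R)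
    (B : Matrix (Fin m₂) (Fin m₂) R) (i p : Fin m₁) (j q : Fin m₂) :
    LinearMap.toMatrix (stdBasis R _ _) (stdBasis R _ _) (sylvLMap R m₁ m₂ A B) (i, j) (p, q) =
      (if p = i then B q j else 0) - (if q = j then A i p else 0) := by
  rw [LinearMap.toMatrix_apply, stdBasis_eq_single, stdBasis_repr_apply]
  simp [sylvLMap, Matrix.single, Matrix.mul_apply, ite_and]

theorem charpoly_sylvLMap_of_isUpperTriangular {A : Matrix (Fin m₁) (Fin m₁) R}
    {B : Matrix (Fin m₂) (Fin m₂) R} (hA : A.IsUpperTriangular) (hB : B.IsUpperTriangular) :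
    (sylvLMap R m₁ m₂ A B).charpoly = ∏ i, ∏ j, (X - C (B j j - A i i)) := by
  let e : Fin m₁ × Fin m₂ ≃ (Fin m₂)ᵒᵈ ×ₗ Fin m₁ :=
    (Equiv.prodComm _ _).trans ((OrderDual.toDual.prodCongr (Equiv.refl _)).trans toLex)
  have hM : (reindex e e (LinearMap.toMatrix (stdBasis R _ _) (stdBasis R _ _)
      (sylvLMap R m₁ m₂ A B))).IsUpperTriangular := by
    refine blockTriangular_reindex_iff.mpr ?_
    rintro ⟨i, j⟩ ⟨p, q⟩ hlt
    rw [toMatrix_sylvLMap_apply]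
    rcases Prod.Lex.toLex_lt_toLex.mp hlt with hqj | ⟨hqj, hpi⟩
    · replace hqj : j < q := hqj
      simp [hqj.ne', hB hqj]
    · obtain rfl : q = j := hqj
      replace hpi : p < i := hpi
      simp [hpi.ne, hA hpi]
  rw [← LinearMap.charpoly_toMatrix _ (stdBasis R (Fin m₁) (Fin m₂)), ← charpoly_reindex e,
    charpoly_of_isUpperTriangular _ hM, ← e.prod_comp, Fintype.prod_prod_type]
  simp [toMatrix_sylvLMap_apply]

end Sylvester

/-- **Characteristic polynomial of the Sylvester map.**
Over an algebraically closed field `k`, if `A` has characteristic polynomial `∏ᵢ (t − αᵢ)`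
and `B` has characteristic polynomial `∏ⱼ (t − βⱼ)`, then the endomorphism
`X ↦ X·B − A·X` of the space of `m₁ × m₂` matrices has characteristic polynomial
`∏_{i,j} (t − βⱼ + αᵢ)`; in particular it is bijective when `A` and `B` have no common
eigenvalue. -/
theorem charpoly_sylvLMap
    (k : Type*) [Field k] [IsAlgClosed k] (m₁ m₂ : ℕ)
    (A : Matrix (Fin m₁) (Fin m₁) k) (B : Matrix (Fin m₂) (Fin m₂) k)
    (α : Fin m₁ → k) (β : Fin m₂ → k)
    (hA : A.charpoly = ∏ i, (X - C (α i)))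
    (hB : B.charpoly = ∏ j, (X - C (β j))) :
    (sylvLMap k m₁ m₂ A B).charpoly = ∏ i, ∏ j, (X - C (β j - α i)) ∧
    ((∀ i j, α i ≠ β j) → Function.Bijective (sylvLMap k m₁ m₂ A B)) := by
  obtain ⟨P, hP⟩ := A.exists_units_conj_isUpperTriangular
  obtain ⟨Q, hQ⟩ := B.exists_units_conj_isUpperTriangular
  have hdiagA : ∏ i, (X - C ((P⁻¹.val * A * P.val) i i)) = ∏ i, (X - C (α i)) := by
    rw [← charpoly_of_isUpperTriangular _ hP, coe_units_inv, charpoly_units_conj', hA]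
  have hdiagB : ∏ j, (X - C ((Q⁻¹.val * B * Q.val) j j)) = ∏ j, (X - C (β j)) := by
    rw [← charpoly_of_isUpperTriangular _ hQ, coe_units_inv, charpoly_units_conj', hB]
  have hchar : (sylvLMap k m₁ m₂ A B).charpoly = ∏ i, ∏ j, (X - C (β j - α i)) := by
    rw [← charpoly_sylvLMap_units_conj A B P Q, charpoly_sylvLMap_of_isUpperTriangular hP hQ,
      ← prod_eq_prod_of_prod_X_sub_C_eq hdiagA fun a => ∏ j, (X - C (β j - a))]
    exact Finset.prod_congr rfl fun i _ =>
      prod_eq_prod_of_prod_X_sub_C_eq hdiagB fun b => X - C (b - (P⁻¹.val * A * P.val) i i)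
  refine ⟨hchar, fun hne => ?_⟩
  have hinj : Function.Injective (sylvLMap k m₁ m₂ A B) := by
    refine (injective_iff_map_eq_zero _).mpr fun Y hY => ?_
    by_contra hY0
    have hcoeff := (LinearMap.charpoly_constantCoeff_eq_zero_iff _).mpr ⟨Y, hY0, hY⟩
    simp [hchar, map_prod, Finset.prod_eq_zero_iff, sub_eq_zero, hne] at hcoeff
  exact ⟨hinj, LinearMap.injective_iff_surjective.mp hinj⟩
end

section
/- Let K be a number field with ring of integers O_K, and let A₁₁ ∈ GL_{m₁}(O_K) and A₂₂ ∈ GL_{m₂}(O_K) have characteristic polynomials with no common root in an algebraic closure of K. For A₁₂, A'₁₂ ∈ M_{m₁×m₂}(O_K), the block upper triangular matrices [[A₁₁, A₁₂],[0, A₂₂]] and [[A₁₁, A'₁₂],[0, A₂₂]] are conjugate in GL_{m₁+m₂}(O_K) if and only if there exist B₁₁ ∈ GL_{m₁}(O_K) commuting with A₁₁ and B₂₂ ∈ GL_{m₂}(O_K) commuting with A₂₂ such that A'₁₂ − B₁₁·A₁₂·B₂₂⁻¹ lies in the image of the map P_{A₁₁,A₂₂} : X ↦ X·A₂₂ − A₁₁·X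 on M_{m₁×m₂}(O_K). -/
open scoped NumberField

/-!
A conjugator `Q` from `[[A₁₁, A₁₂], [0, A₂₂]]` to `[[A₁₁, A'₁₂], [0, A₂₂]]` has lower-left block
`Q₂₁` with `Q₂₁ A₁₁ = A₂₂ Q₂₁`. Writing `u χ₁ + v χ₂ = 1` over `K` (the characteristic
polynomials are coprime), `u(A₂₂)` inverts `χ₁(A₂₂)`, while `χ₁(A₂₂) Q₂₁ = Q₂₁ χ₁(A₁₁) = 0`;
so `Q₂₁ = 0`. Hence the conjugators are exactly the invertible `[[B₁₁, Y], [0, B₂₂]]`, and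
for these the conjugation equation says that `B₁₁`, `B₂₂` commute with `A₁₁`, `A₂₂` and that
`P_{A₁₁,A₂₂}(Y B₂₂⁻¹) = A'₁₂ − B₁₁ A₁₂ B₂₂⁻¹`.
-/

open Polynomial

namespace Matrix

section Intertwiner

variable {R : Type*} [CommRing R] {m n : Type*} [Fintype m] [Fintype n] [DecidableEq m]
  [DecidableEq n] {A : Matrix n n R} {B : Matrix m m R} {M : Matrix m n R}

theorem mul_pow_eq_pow_mul (h : M * A = B * M) (k : ℕ) : M * A ^ k = B ^ k * M := by
  induction k with
  | zero => simp
  | succ k ih => rw [pow_succ, pow_succ, ← Matrix.mul_assoc, ih, Matrix.mul_assoc, h,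
      ← Matrix.mul_assoc]

theorem mul_aeval_eq_aeval_mul (h : M * A = B * M) (p : R[X]) :
    M * aeval A p = aeval B p * M := by
  induction p using Polynomial.induction_on' with
  | add p q hp hq => simp only [map_add, Matrix.mul_add, Matrix.add_mul, hp, hq]
  | monomial k c => simp only [aeval_monomial, ← Algebra.smul_def, Matrix.mul_smul,
      Matrix.smul_mul, mul_pow_eq_pow_mul h k]

theorem eq_zero_of_mul_eq_mul_of_isCoprime_charpoly (hcop : IsCoprime A.charpoly B.charpoly)
    (h : M * A = B * M) : M = 0 := by
  obtain ⟨u, v, huv⟩ := hcop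
  calc M = aeval B (u * A.charpoly + v * B.charpoly) * M := by
        rw [huv, map_one, Matrix.one_mul]
    _ = aeval B u * (M * aeval A A.charpoly) := by
        rw [map_add, map_mul, map_mul, aeval_self_charpoly, mul_zero, add_zero,
          Matrix.mul_assoc, mul_aeval_eq_aeval_mul h]
    _ = 0 := by rw [aeval_self_charpoly, Matrix.mul_zero, Matrix.mul_zero]

theorem eq_zero_of_mul_eq_mul_of_isCoprime_charpoly_map {S : Type*} [CommRing S] (φ : R →+* S)
    (hφ : Function.Injective φ) (hcop : IsCoprime (A.charpoly.map φ) (B.charpoly.map φ))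
    (h : M * A = B * M) : M = 0 := by
  rw [← charpoly_map, ← charpoly_map] at hcop
  apply map_injective hφ
  change M.map φ = (0 : Matrix m n R).map φ
  rw [Matrix.map_zero _ φ.map_zero]
  exact eq_zero_of_mul_eq_mul_of_isCoprime_charpoly hcop (by
    rw [← Matrix.map_mul, ← Matrix.map_mul, h])

end Intertwiner

section BlockTriangular

variable {R : Type*} [CommRing R] {m n : Type*} [Fintype m] [Fintype n]
  {a₁ b₁ : Matrix m m R} {a₂ b₂ : Matrix n n R} {c c' y : Matrix m n R}

theorem toBlocks₂₁_mul_eq_mul_toBlocks₂₁ {P : Matrix (m ⊕ n) (m ⊕ n) R}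
    (h : SemiconjBy P (fromBlocks a₁ c 0 a₂) (fromBlocks a₁ c' 0 a₂)) :
    P.toBlocks₂₁ * a₁ = a₂ * P.toBlocks₂₁ := by
  rw [SemiconjBy, ← fromBlocks_toBlocks P] at h
  simpa [fromBlocks_multiply] using congrArg toBlocks₂₁ h

theorem semiconjBy_fromBlocks_zero₂₁_iff :
    SemiconjBy (fromBlocks b₁ y 0 b₂) (fromBlocks a₁ c 0 a₂) (fromBlocks a₁ c' 0 a₂) ↔
      Commute b₁ a₁ ∧ Commute b₂ a₂ ∧ y * a₂ - a₁ * y = c' * b₂ - b₁ * c := by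
  simp only [SemiconjBy, Commute, fromBlocks_multiply, fromBlocks_inj, Matrix.mul_zero,
    Matrix.zero_mul, add_zero, zero_add, true_and, sub_eq_sub_iff_add_eq_add,
    add_comm (y * a₂), add_comm (c' * b₂)]
  tauto

end BlockTriangular

end Matrix

open Matrix

section Sylvester

variable {R : Type*} [CommRing R] {m₁ m₂ : ℕ} {a₁ : Matrix (Fin m₁) (Fin m₁) R}
  {a₂ : Matrix (Fin m₂) (Fin m₂) R}

theorem sylvLMap_mul_of_commute {N : Matrix (Fin m₂) (Fin m₂) R} (hN : Commute N a₂)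
    (X : Matrix (Fin m₁) (Fin m₂) R) :
    sylvLMap R m₁ m₂ a₁ a₂ (X * N) = sylvLMap R m₁ m₂ a₁ a₂ X * N := by
  change X * N * a₂ - a₁ * (X * N) = (X * a₂ - a₁ * X) * N
  rw [Matrix.mul_assoc, hN.eq, Matrix.sub_mul, Matrix.mul_assoc, Matrix.mul_assoc]

theorem mul_mem_range_sylvLMap {N : Matrix (Fin m₂) (Fin m₂) R} (hN : Commute N a₂)
    {Z : Matrix (Fin m₁) (Fin m₂) R} (hZ : Z ∈ LinearMap.range (sylvLMap R m₁ m₂ a₁ a₂)) :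
    Z * N ∈ LinearMap.range (sylvLMap R m₁ m₂ a₁ a₂) := by
  obtain ⟨X, rfl⟩ := hZ
  exact ⟨X * N, sylvLMap_mul_of_commute hN X⟩

theorem mul_unit_mem_range_sylvLMap_iff {u : GL (Fin m₂) R}
    (hu : Commute (u : Matrix (Fin m₂) (Fin m₂) R) a₂)
    {Z : Matrix (Fin m₁) (Fin m₂) R} :
    Z * (u : Matrix (Fin m₂) (Fin m₂) R) ∈ LinearMap.range (sylvLMap R m₁ m₂ a₁ a₂) ↔
      Z ∈ LinearMap.range (sylvLMap R m₁ m₂ a₁ a₂) := by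
  refine ⟨fun h => ?_, mul_mem_range_sylvLMap hu⟩
  simpa only [Matrix.mul_assoc, Units.mul_inv, Matrix.mul_one] using
    mul_mem_range_sylvLMap hu.units_inv_left h

variable {c c' : Matrix (Fin m₁) (Fin m₂) R}

theorem exists_commute_of_semiconjBy_fromBlocks
    (hvanish : ∀ M : Matrix (Fin m₂) (Fin m₁) R, M * a₁ = a₂ * M → M = 0)
    {P : Matrix (Fin m₁ ⊕ Fin m₂) (Fin m₁ ⊕ Fin m₂) R} (hP : IsUnit P)
    (hconj : SemiconjBy P (fromBlocks a₁ c 0 a₂) (fromBlocks a₁ c' 0 a₂)) :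
    ∃ (B₁ : GL (Fin m₁) R) (B₂ : GL (Fin m₂) R), Commute (B₁ : Matrix (Fin m₁) (Fin m₁) R) a₁ ∧
      Commute (B₂ : Matrix (Fin m₂) (Fin m₂) R) a₂ ∧
      c' - (B₁ : Matrix (Fin m₁) (Fin m₁) R) * c *
          ((B₂⁻¹ : GL (Fin m₂) R) : Matrix (Fin m₂) (Fin m₂) R) ∈
        LinearMap.range (sylvLMap R m₁ m₂ a₁ a₂) := by
  have hP₂₁ : P = fromBlocks P.toBlocks₁₁ P.toBlocks₁₂ 0 P.toBlocks₂₂ := by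
    rw [← hvanish _ (toBlocks₂₁_mul_eq_mul_toBlocks₂₁ hconj), fromBlocks_toBlocks]
  rw [hP₂₁] at hP hconj
  obtain ⟨hP₁₁, hP₂₂⟩ := isUnit_fromBlocks_zero₂₁.1 hP
  obtain ⟨h₁, h₂, h₁₂⟩ := semiconjBy_fromBlocks_zero₂₁_iff.1 hconj
  refine ⟨hP₁₁.unit, hP₂₂.unit, h₁, h₂, ?_⟩
  rw [← mul_unit_mem_range_sylvLMap_iff (u := hP₂₂.unit) h₂]
  simp only [Matrix.sub_mul, Matrix.mul_assoc, Units.inv_mul, Matrix.mul_one]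
  rw [IsUnit.unit_spec]
  exact ⟨P.toBlocks₁₂, h₁₂⟩

theorem exists_semiconjBy_fromBlocks_of_commute (B₁ : GL (Fin m₁) R) (B₂ : GL (Fin m₂) R)
    (h₁ : Commute (B₁ : Matrix (Fin m₁) (Fin m₁) R) a₁)
    (h₂ : Commute (B₂ : Matrix (Fin m₂) (Fin m₂) R) a₂)
    (hmem : c' - (B₁ : Matrix (Fin m₁) (Fin m₁) R) * c *
        ((B₂⁻¹ : GL (Fin m₂) R) : Matrix (Fin m₂) (Fin m₂) R) ∈
      LinearMap.range (sylvLMap R m₁ m₂ a₁ a₂)) :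
    ∃ P : GL (Fin m₁ ⊕ Fin m₂) R,
      SemiconjBy (P : Matrix (Fin m₁ ⊕ Fin m₂) (Fin m₁ ⊕ Fin m₂) R) (fromBlocks a₁ c 0 a₂)
        (fromBlocks a₁ c' 0 a₂) := by
  rw [← mul_unit_mem_range_sylvLMap_iff h₂] at hmem
  simp only [Matrix.sub_mul, Matrix.mul_assoc, Units.inv_mul, Matrix.mul_one] at hmem
  obtain ⟨Y, hY⟩ := hmem
  have hP : IsUnit (fromBlocks (B₁ : Matrix (Fin m₁) (Fin m₁) R) Y 0 B₂) :=
    isUnit_fromBlocks_zero₂₁.2 ⟨B₁.isUnit, B₂.isUnit⟩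
  exact ⟨hP.unit, semiconjBy_fromBlocks_zero₂₁_iff.2 ⟨h₁, h₂, hY⟩⟩

end Sylvester

theorem blockTriangular_conjugate_iff_general
    (K : Type*) [Field K] (m₁ m₂ : ℕ)
    (A₁₁ : GL (Fin m₁) (𝓞 K)) (A₂₂ : GL (Fin m₂) (𝓞 K))
    (A₁₂ A₁₂' : Matrix (Fin m₁) (Fin m₂) (𝓞 K))
    (hcommon : ∀ x : AlgebraicClosure K,
      ¬((((A₁₁ : Matrix (Fin m₁) (Fin m₁) (𝓞 K)).charpoly.map (algebraMap (𝓞 K) K)).map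
            (algebraMap K (AlgebraicClosure K))).IsRoot x ∧
        (((A₂₂ : Matrix (Fin m₂) (Fin m₂) (𝓞 K)).charpoly.map (algebraMap (𝓞 K) K)).map
            (algebraMap K (AlgebraicClosure K))).IsRoot x)) :
    (∃ P : GL (Fin m₁ ⊕ Fin m₂) (𝓞 K),
      (P : Matrix (Fin m₁ ⊕ Fin m₂) (Fin m₁ ⊕ Fin m₂) (𝓞 K)) *
          Matrix.fromBlocks (A₁₁ : Matrix (Fin m₁) (Fin m₁) (𝓞 K)) A₁₂ 0
            (A₂₂ : Matrix (Fin m₂) (Fin m₂) (𝓞 K)) *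
          ((P⁻¹ : GL (Fin m₁ ⊕ Fin m₂) (𝓞 K)) :
            Matrix (Fin m₁ ⊕ Fin m₂) (Fin m₁ ⊕ Fin m₂) (𝓞 K)) =
        Matrix.fromBlocks (A₁₁ : Matrix (Fin m₁) (Fin m₁) (𝓞 K)) A₁₂' 0
          (A₂₂ : Matrix (Fin m₂) (Fin m₂) (𝓞 K))) ↔
    (∃ (B₁₁ : GL (Fin m₁) (𝓞 K)) (B₂₂ : GL (Fin m₂) (𝓞 K)),
      (B₁₁ : Matrix (Fin m₁) (Fin m₁) (𝓞 K)) * (A₁₁ : Matrix (Fin m₁) (Fin m₁) (𝓞 K)) =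
        (A₁₁ : Matrix (Fin m₁) (Fin m₁) (𝓞 K)) * (B₁₁ : Matrix (Fin m₁) (Fin m₁) (𝓞 K)) ∧
      (B₂₂ : Matrix (Fin m₂) (Fin m₂) (𝓞 K)) * (A₂₂ : Matrix (Fin m₂) (Fin m₂) (𝓞 K)) =
        (A₂₂ : Matrix (Fin m₂) (Fin m₂) (𝓞 K)) * (B₂₂ : Matrix (Fin m₂) (Fin m₂) (𝓞 K)) ∧
      A₁₂' - (B₁₁ : Matrix (Fin m₁) (Fin m₁) (𝓞 K)) * A₁₂ *
          ((B₂₂⁻¹ : GL (Fin m₂) (𝓞 K)) : Matrix (Fin m₂) (Fin m₂) (𝓞 K)) ∈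
        LinearMap.range (sylvLMap (𝓞 K) m₁ m₂
          (A₁₁ : Matrix (Fin m₁) (Fin m₁) (𝓞 K)) (A₂₂ : Matrix (Fin m₂) (Fin m₂) (𝓞 K)))) := by
  have hcop : IsCoprime ((A₁₁ : Matrix (Fin m₁) (Fin m₁) (𝓞 K)).charpoly.map (algebraMap (𝓞 K) K))
      ((A₂₂ : Matrix (Fin m₂) (Fin m₂) (𝓞 K)).charpoly.map (algebraMap (𝓞 K) K)) :=
    (isCoprime_iff_aeval_ne_zero_of_isAlgClosed K (AlgebraicClosure K) _ _).2 fun x => by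
      simpa only [IsRoot.def, eval_map_algebraMap, not_and_or] using hcommon x
  simp only [Units.mul_inv_eq_iff_eq_mul]
  exact ⟨fun ⟨P, hP⟩ => exists_commute_of_semiconjBy_fromBlocks
      (fun _ hM => eq_zero_of_mul_eq_mul_of_isCoprime_charpoly_map _
        (FaithfulSMul.algebraMap_injective _ K) hcop hM) P.isUnit hP,
    fun ⟨B₁, B₂, h₁, h₂, hmem⟩ => exists_semiconjBy_fromBlocks_of_commute B₁ B₂ h₁ h₂ hmem⟩

/-- **Conjugacy criterion for block upper-triangular matrices.**
Let `A₁₁ ∈ GL_{m₁}(𝓞 K)` and `A₂₂ ∈ GL_{m₂}(𝓞 K)` have characteristic polynomials with no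
common root in an algebraic closure of `K`.  The matrices `[[A₁₁, A₁₂],[0, A₂₂]]` and
`[[A₁₁, A'₁₂],[0, A₂₂]]` are conjugate in `GL_{m₁+m₂}(𝓞 K)` iff there are `B₁₁` commuting
with `A₁₁` and `B₂₂` commuting with `A₂₂` such that `A'₁₂ − B₁₁·A₁₂·B₂₂⁻¹` lies in the image
of `X ↦ X·A₂₂ − A₁₁·X`. -/
theorem blockTriangular_conjugate_iff
    (K : Type*) [Field K] [NumberField K] (m₁ m₂ : ℕ)
    (A₁₁ : GL (Fin m₁) (𝓞 K)) (A₂₂ : GL (Fin m₂) (𝓞 K))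
    (A₁₂ A₁₂' : Matrix (Fin m₁) (Fin m₂) (𝓞 K))
    (hcommon : ∀ x : AlgebraicClosure K,
      ¬((((A₁₁ : Matrix (Fin m₁) (Fin m₁) (𝓞 K)).charpoly.map (algebraMap (𝓞 K) K)).map
            (algebraMap K (AlgebraicClosure K))).IsRoot x ∧
        (((A₂₂ : Matrix (Fin m₂) (Fin m₂) (𝓞 K)).charpoly.map (algebraMap (𝓞 K) K)).map
            (algebraMap K (AlgebraicClosure K))).IsRoot x)) :
    (∃ P : GL (Fin m₁ ⊕ Fin m₂) (𝓞 K),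
      (P : Matrix (Fin m₁ ⊕ Fin m₂) (Fin m₁ ⊕ Fin m₂) (𝓞 K)) *
          Matrix.fromBlocks (A₁₁ : Matrix (Fin m₁) (Fin m₁) (𝓞 K)) A₁₂ 0
            (A₂₂ : Matrix (Fin m₂) (Fin m₂) (𝓞 K)) *
          ((P⁻¹ : GL (Fin m₁ ⊕ Fin m₂) (𝓞 K)) :
            Matrix (Fin m₁ ⊕ Fin m₂) (Fin m₁ ⊕ Fin m₂) (𝓞 K)) =
        Matrix.fromBlocks (A₁₁ : Matrix (Fin m₁) (Fin m₁) (𝓞 K)) A₁₂' 0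
          (A₂₂ : Matrix (Fin m₂) (Fin m₂) (𝓞 K))) ↔
    (∃ (B₁₁ : GL (Fin m₁) (𝓞 K)) (B₂₂ : GL (Fin m₂) (𝓞 K)),
      (B₁₁ : Matrix (Fin m₁) (Fin m₁) (𝓞 K)) * (A₁₁ : Matrix (Fin m₁) (Fin m₁) (𝓞 K)) =
        (A₁₁ : Matrix (Fin m₁) (Fin m₁) (𝓞 K)) * (B₁₁ : Matrix (Fin m₁) (Fin m₁) (𝓞 K)) ∧
      (B₂₂ : Matrix (Fin m₂) (Fin m₂) (𝓞 K)) * (A₂₂ : Matrix (Fin m₂) (Fin m₂) (𝓞 K)) =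
        (A₂₂ : Matrix (Fin m₂) (Fin m₂) (𝓞 K)) * (B₂₂ : Matrix (Fin m₂) (Fin m₂) (𝓞 K)) ∧
      A₁₂' - (B₁₁ : Matrix (Fin m₁) (Fin m₁) (𝓞 K)) * A₁₂ *
          ((B₂₂⁻¹ : GL (Fin m₂) (𝓞 K)) : Matrix (Fin m₂) (Fin m₂) (𝓞 K)) ∈
        LinearMap.range (sylvLMap (𝓞 K) m₁ m₂
          (A₁₁ : Matrix (Fin m₁) (Fin m₁) (𝓞 K)) (A₂₂ : Matrix (Fin m₂) (Fin m₂) (𝓞 K)))) :=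
  blockTriangular_conjugate_iff_general K m₁ m₂ A₁₁ A₂₂ A₁₂ A₁₂' hcommon
end

section
/- Let K be a number field with ring of integers O_K, let A₁₁ ∈ GL_{m₁}(O_K) and A₂₂ ∈ GL_{m₂}(O_K) have characteristic polynomials with no common root in an algebraic closure of K, let A₁₂ ∈ M_{m₁×m₂}(O_K), and let A = [[A₁₁, A₁₂],[0, A₂₂]]. Let Q_mod denote the quotient of M_{m₁×m₂}(O_K) by the image of the map X ↦ X·A₂₂ − A₁₁·X, on which the group C(A₁₁) × C(A₂₂) (centralizers in GL_{m₁}(O_K) and GL_{m₂}(O_K)) acts by (B₁₁, B₂₂)·[M] = [B₁₁·M·B₂₂⁻¹]. Then the map sending C in the centralizer of A in GL_{m₁+m₂}(O_K) to the pair (C₁₁, C₂₂) of its diagonal blocks is an injective group homomorphism into C(A₁₁) × C(A₂₂), its image equals the stabilizer of the class of A₁₂ in Q_mod, and hence its index in C(A₁₁) × C(A₂₂) equals the cardinality of the orbit of the class of A₁₂ in Q_mod. -/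
open scoped NumberField

/-- The centralizer in `GL n R` of a (not necessarily invertible) square matrix `A`. -/
def matCentralizer {n R : Type*} [Fintype n] [DecidableEq n] [CommRing R]
    (A : Matrix n n R) : Subgroup (GL n R) where
  carrier := {C | (C : Matrix n n R) * A = A * (C : Matrix n n R)}
  one_mem' := by simp
  mul_mem' {C D} hC hD := by
    have hC' : (C : Matrix n n R) * A = A * (C : Matrix n n R) := hC
    have hD' : (D : Matrix n n R) * A = A * (D : Matrix n n R) := hD
    show ((C * D : GL n R) : Matrix n n R) * A = A * ((C * D : GL n R) : Matrix n n R)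
    rw [Units.val_mul, mul_assoc, hD', ← mul_assoc, hC', mul_assoc]
  inv_mem' {C} hC := by
    have hC' : (C : Matrix n n R) * A = A * (C : Matrix n n R) := hC
    show ((C⁻¹ : GL n R) : Matrix n n R) * A = A * ((C⁻¹ : GL n R) : Matrix n n R)
    calc ((C⁻¹ : GL n R) : Matrix n n R) * A
        = ((C⁻¹ : GL n R) : Matrix n n R) * A *
            ((C : Matrix n n R) * ((C⁻¹ : GL n R) : Matrix n n R)) := by
          rw [Units.mul_inv, mul_one]
      _ = ((C⁻¹ : GL n R) : Matrix n n R) * ((C : Matrix n n R) * A) *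
            ((C⁻¹ : GL n R) : Matrix n n R) := by
          rw [hC']; noncomm_ring
      _ = (((C⁻¹ : GL n R) : Matrix n n R) * (C : Matrix n n R)) * A *
            ((C⁻¹ : GL n R) : Matrix n n R) := by noncomm_ring
      _ = A * ((C⁻¹ : GL n R) : Matrix n n R) := by rw [Units.inv_mul, one_mul]


open Polynomial in
lemma sylv_matrix_eq_zero {R : Type*} [CommRing R] {m₁ m₂ : ℕ}
    (A : Matrix (Fin m₁) (Fin m₁) R) (B : Matrix (Fin m₂) (Fin m₂) R)
    (hco : IsCoprime A.charpoly B.charpoly)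
    (X : Matrix (Fin m₁) (Fin m₂) R) (hX : A * X = X * B) : X = 0 := by
  have hpow : ∀ n : ℕ, A ^ n * X = X * B ^ n := by
    intro n
    induction n with
    | zero => simp
    | succ n ih =>
      rw [pow_succ, pow_succ, Matrix.mul_assoc, hX, ← Matrix.mul_assoc, ih, Matrix.mul_assoc]
  have key : ∀ p : R[X], (aeval A p) * X = X * (aeval B p) := by
    intro p
    induction p using Polynomial.induction_on' with
    | add p q hp hq => rw [map_add, map_add, Matrix.add_mul, Matrix.mul_add, hp, hq]
    | monomial n r =>
      rw [aeval_monomial, aeval_monomial, Algebra.algebraMap_eq_smul_one,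
        Algebra.algebraMap_eq_smul_one, smul_mul_assoc, one_mul, smul_mul_assoc, one_mul,
        Matrix.smul_mul, Matrix.mul_smul, hpow n]
  obtain ⟨a, b, hab⟩ := hco
  have h1 : aeval A A.charpoly = 0 := Matrix.aeval_self_charpoly A
  have h2 : aeval B B.charpoly = 0 := Matrix.aeval_self_charpoly B
  have hcomm : aeval B a * aeval B A.charpoly = aeval B A.charpoly * aeval B a := by
    rw [← map_mul, mul_comm a, map_mul]
  calc X = X * aeval B (a * A.charpoly + b * B.charpoly) := by rw [hab, map_one, Matrix.mul_one]
    _ = X * aeval B A.charpoly * aeval B a + X * aeval B b * aeval B B.charpoly := by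
        rw [map_add, map_mul, map_mul, Matrix.mul_add, hcomm, ← Matrix.mul_assoc,
          ← Matrix.mul_assoc]
    _ = aeval A A.charpoly * X * aeval B a + X * aeval B b * aeval B B.charpoly := by
        rw [key A.charpoly]
    _ = 0 := by rw [h1, h2, Matrix.zero_mul, Matrix.zero_mul, Matrix.mul_zero, add_zero]

open Polynomial in
lemma coprime_of_no_common_root {K : Type*} [Field K] {p q : K[X]} (hp : p ≠ 0)
    (h : ∀ x : AlgebraicClosure K,
      ¬((p.map (algebraMap K (AlgebraicClosure K))).IsRoot x ∧
        (q.map (algebraMap K (AlgebraicClosure K))).IsRoot x)) : IsCoprime p q := by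
  classical
  rw [← EuclideanDomain.gcd_isUnit_iff]
  by_contra hu
  set d := EuclideanDomain.gcd p q with hd
  have hdeg : d.degree ≠ 0 := fun h0 => hu (Polynomial.isUnit_iff_degree_eq_zero.mpr h0)
  have hdeg' : (d.map (algebraMap K (AlgebraicClosure K))).degree ≠ 0 := by
    rwa [Polynomial.degree_map_eq_of_injective (algebraMap K (AlgebraicClosure K)).injective]
  obtain ⟨x, hx⟩ := IsAlgClosed.exists_root _ hdeg'
  exact h x ⟨hx.dvd (Polynomial.map_dvd _ (EuclideanDomain.gcd_dvd_left p q)),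
    hx.dvd (Polynomial.map_dvd _ (EuclideanDomain.gcd_dvd_right p q))⟩

def conjLMap (R : Type*) [CommRing R] (m₁ m₂ : ℕ)
    (a : Matrix (Fin m₁) (Fin m₁) R) (b : Matrix (Fin m₂) (Fin m₂) R) :
    Matrix (Fin m₁) (Fin m₂) R →ₗ[R] Matrix (Fin m₁) (Fin m₂) R where
  toFun M := a * M * b
  map_add' X Y := by simp [Matrix.mul_add, Matrix.add_mul]
  map_smul' c X := by simp [Matrix.mul_smul, Matrix.smul_mul]

lemma conj_mem_range {R : Type*} [CommRing R] {m₁ m₂ : ℕ}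
    {a₁ : Matrix (Fin m₁) (Fin m₁) R} {a₂ : Matrix (Fin m₂) (Fin m₂) R}
    {a : Matrix (Fin m₁) (Fin m₁) R} {b : Matrix (Fin m₂) (Fin m₂) R}
    (ha : a * a₁ = a₁ * a) (hb : b * a₂ = a₂ * b)
    {M : Matrix (Fin m₁) (Fin m₂) R}
    (hM : M ∈ LinearMap.range (sylvLMap R m₁ m₂ a₁ a₂)) :
    a * M * b ∈ LinearMap.range (sylvLMap R m₁ m₂ a₁ a₂) := by
  obtain ⟨X, rfl⟩ := hM
  refine ⟨a * X * b, ?_⟩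
  show a * X * b * a₂ - a₁ * (a * X * b) = a * (X * a₂ - a₁ * X) * b
  have h1 : a * X * b * a₂ = a * (X * a₂) * b := by
    rw [Matrix.mul_assoc (a * X), hb, ← Matrix.mul_assoc, Matrix.mul_assoc a X a₂]
  have h2 : a₁ * (a * X * b) = a * (a₁ * X) * b := by
    rw [← Matrix.mul_assoc, ← Matrix.mul_assoc, ← ha, Matrix.mul_assoc a a₁ X]
  rw [h1, h2, ← Matrix.sub_mul, ← Matrix.mul_sub]

lemma mul_eq_fromBlocks {R : Type*} [CommRing R] {m₁ m₂ : ℕ}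
    (M N : Matrix (Fin m₁ ⊕ Fin m₂) (Fin m₁ ⊕ Fin m₂) R) :
    M * N = Matrix.fromBlocks
      (M.toBlocks₁₁ * N.toBlocks₁₁ + M.toBlocks₁₂ * N.toBlocks₂₁)
      (M.toBlocks₁₁ * N.toBlocks₁₂ + M.toBlocks₁₂ * N.toBlocks₂₂)
      (M.toBlocks₂₁ * N.toBlocks₁₁ + M.toBlocks₂₂ * N.toBlocks₂₁)
      (M.toBlocks₂₁ * N.toBlocks₁₂ + M.toBlocks₂₂ * N.toBlocks₂₂) := by
  conv_lhs => rw [← Matrix.fromBlocks_toBlocks M, ← Matrix.fromBlocks_toBlocks N]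
  rw [Matrix.fromBlocks_multiply]

lemma toBlocks₁₁_mul {R : Type*} [CommRing R] {m₁ m₂ : ℕ}
    (M N : Matrix (Fin m₁ ⊕ Fin m₂) (Fin m₁ ⊕ Fin m₂) R) :
    (M * N).toBlocks₁₁ = M.toBlocks₁₁ * N.toBlocks₁₁ + M.toBlocks₁₂ * N.toBlocks₂₁ := by
  rw [mul_eq_fromBlocks, Matrix.toBlocks_fromBlocks₁₁]

lemma toBlocks₂₂_mul {R : Type*} [CommRing R] {m₁ m₂ : ℕ}
    (M N : Matrix (Fin m₁ ⊕ Fin m₂) (Fin m₁ ⊕ Fin m₂) R) :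
    (M * N).toBlocks₂₂ = M.toBlocks₂₁ * N.toBlocks₁₂ + M.toBlocks₂₂ * N.toBlocks₂₂ := by
  rw [mul_eq_fromBlocks, Matrix.toBlocks_fromBlocks₂₂]

lemma centralizer_blocks {R : Type*} [CommRing R] {m₁ m₂ : ℕ}
    (a₁ : Matrix (Fin m₁) (Fin m₁) R) (a₂ : Matrix (Fin m₂) (Fin m₂) R)
    (A₁₂ : Matrix (Fin m₁) (Fin m₂) R)
    (hinj₂ : ∀ X : Matrix (Fin m₂) (Fin m₁) R, a₂ * X = X * a₁ → X = 0)
    (C : Matrix (Fin m₁ ⊕ Fin m₂) (Fin m₁ ⊕ Fin m₂) R)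
    (hC : C * Matrix.fromBlocks a₁ A₁₂ 0 a₂ = Matrix.fromBlocks a₁ A₁₂ 0 a₂ * C) :
    C.toBlocks₂₁ = 0 ∧
    C.toBlocks₁₁ * a₁ = a₁ * C.toBlocks₁₁ ∧
    C.toBlocks₂₂ * a₂ = a₂ * C.toBlocks₂₂ ∧
    C.toBlocks₁₁ * A₁₂ + C.toBlocks₁₂ * a₂ = a₁ * C.toBlocks₁₂ + A₁₂ * C.toBlocks₂₂ := by
  rw [← Matrix.fromBlocks_toBlocks C, Matrix.fromBlocks_multiply, Matrix.fromBlocks_multiply,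
    Matrix.fromBlocks_inj] at hC
  obtain ⟨h11, h12, h21, h22⟩ := hC
  simp only [Matrix.mul_zero, Matrix.zero_mul, add_zero, zero_add] at h11 h12 h21 h22
  have hz : C.toBlocks₂₁ = 0 := hinj₂ _ h21.symm
  rw [hz] at h11 h22
  simp only [Matrix.mul_zero, Matrix.zero_mul, add_zero, zero_add] at h11 h22
  exact ⟨hz, h11, h22, h12⟩

lemma blockUnit_aux {R : Type*} [CommRing R] {m₁ m₂ : ℕ}
    (C D : Matrix (Fin m₁ ⊕ Fin m₂) (Fin m₁ ⊕ Fin m₂) R)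
    (h : C * D = 1) (hC : C.toBlocks₂₁ = 0) (hD : D.toBlocks₂₁ = 0) :
    C.toBlocks₁₁ * D.toBlocks₁₁ = 1 ∧ C.toBlocks₂₂ * D.toBlocks₂₂ = 1 := by
  rw [mul_eq_fromBlocks, ← Matrix.fromBlocks_one, Matrix.fromBlocks_inj] at h
  obtain ⟨h11, _, _, h22⟩ := h
  rw [hD] at h11
  rw [hC] at h22
  simp only [Matrix.mul_zero, Matrix.zero_mul, add_zero, zero_add] at h11 h22
  exact ⟨h11, h22⟩


set_option maxHeartbeats 1600000 in
/-- **Structure of the centralizer of a block upper-triangular matrix.**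
Let `A = [[A₁₁, A₁₂],[0, A₂₂]]` with `A₁₁`, `A₂₂` invertible over `𝓞 K` and with
characteristic polynomials having no common root in an algebraic closure of `K`.  Let
`Q_mod` be the quotient of `M_{m₁×m₂}(𝓞 K)` by the image of `X ↦ X·A₂₂ − A₁₁·X`.  The map
`C ↦ (C₁₁, C₂₂)` is an injective group homomorphism from the centralizer of `A` into
`C(A₁₁) × C(A₂₂)`, its range is the stabilizer of the class of `A₁₂` in `Q_mod`, and its
index equals the cardinality of the orbit of the class of `A₁₂` in `Q_mod`. -/
theorem centralizer_blockTriangular_structure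
    (K : Type*) [Field K] [NumberField K] (m₁ m₂ : ℕ)
    (A₁₁ : GL (Fin m₁) (𝓞 K)) (A₂₂ : GL (Fin m₂) (𝓞 K))
    (A₁₂ : Matrix (Fin m₁) (Fin m₂) (𝓞 K))
    (hcommon : ∀ x : AlgebraicClosure K,
      ¬((((A₁₁ : Matrix (Fin m₁) (Fin m₁) (𝓞 K)).charpoly.map (algebraMap (𝓞 K) K)).map
            (algebraMap K (AlgebraicClosure K))).IsRoot x ∧
        (((A₂₂ : Matrix (Fin m₂) (Fin m₂) (𝓞 K)).charpoly.map (algebraMap (𝓞 K) K)).map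
            (algebraMap K (AlgebraicClosure K))).IsRoot x)) :
    ∃ φ : ↥(matCentralizer
            (Matrix.fromBlocks (A₁₁ : Matrix (Fin m₁) (Fin m₁) (𝓞 K)) A₁₂ 0
              (A₂₂ : Matrix (Fin m₂) (Fin m₂) (𝓞 K)))) →*
          ↥((matCentralizer (A₁₁ : Matrix (Fin m₁) (Fin m₁) (𝓞 K))).prod
            (matCentralizer (A₂₂ : Matrix (Fin m₂) (Fin m₂) (𝓞 K)))),
      (∀ C, (((((φ C : GL (Fin m₁) (𝓞 K) × GL (Fin m₂) (𝓞 K)).1 : GL (Fin m₁) (𝓞 K)) :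
              Matrix (Fin m₁) (Fin m₁) (𝓞 K)) =
            ((C : GL (Fin m₁ ⊕ Fin m₂) (𝓞 K)) :
              Matrix (Fin m₁ ⊕ Fin m₂) (Fin m₁ ⊕ Fin m₂) (𝓞 K)).toBlocks₁₁) ∧
          ((((φ C : GL (Fin m₁) (𝓞 K) × GL (Fin m₂) (𝓞 K)).2 : GL (Fin m₂) (𝓞 K)) :
              Matrix (Fin m₂) (Fin m₂) (𝓞 K)) =
            ((C : GL (Fin m₁ ⊕ Fin m₂) (𝓞 K)) :
              Matrix (Fin m₁ ⊕ Fin m₂) (Fin m₁ ⊕ Fin m₂) (𝓞 K)).toBlocks₂₂))) ∧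
      Function.Injective φ ∧
      (∀ p : ↥((matCentralizer (A₁₁ : Matrix (Fin m₁) (Fin m₁) (𝓞 K))).prod
          (matCentralizer (A₂₂ : Matrix (Fin m₂) (Fin m₂) (𝓞 K)))),
        p ∈ MonoidHom.range φ ↔
          (Submodule.Quotient.mk
              (((p : GL (Fin m₁) (𝓞 K) × GL (Fin m₂) (𝓞 K)).1 :
                  Matrix (Fin m₁) (Fin m₁) (𝓞 K)) * A₁₂ *
                (((p : GL (Fin m₁) (𝓞 K) × GL (Fin m₂) (𝓞 K)).2⁻¹ : GL (Fin m₂) (𝓞 K)) :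
                  Matrix (Fin m₂) (Fin m₂) (𝓞 K))) :
            Matrix (Fin m₁) (Fin m₂) (𝓞 K) ⧸
              LinearMap.range (sylvLMap (𝓞 K) m₁ m₂
                (A₁₁ : Matrix (Fin m₁) (Fin m₁) (𝓞 K))
                (A₂₂ : Matrix (Fin m₂) (Fin m₂) (𝓞 K)))) =
          Submodule.Quotient.mk A₁₂) ∧
      (MonoidHom.range φ).index =
        Nat.card {q : Matrix (Fin m₁) (Fin m₂) (𝓞 K) ⧸
            LinearMap.range (sylvLMap (𝓞 K) m₁ m₂
              (A₁₁ : Matrix (Fin m₁) (Fin m₁) (𝓞 K))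
              (A₂₂ : Matrix (Fin m₂) (Fin m₂) (𝓞 K))) //
          ∃ (B₁₁ : GL (Fin m₁) (𝓞 K)) (B₂₂ : GL (Fin m₂) (𝓞 K)),
            B₁₁ ∈ matCentralizer (A₁₁ : Matrix (Fin m₁) (Fin m₁) (𝓞 K)) ∧
            B₂₂ ∈ matCentralizer (A₂₂ : Matrix (Fin m₂) (Fin m₂) (𝓞 K)) ∧
            q = Submodule.Quotient.mk
              ((B₁₁ : Matrix (Fin m₁) (Fin m₁) (𝓞 K)) * A₁₂ *
                ((B₂₂⁻¹ : GL (Fin m₂) (𝓞 K)) : Matrix (Fin m₂) (Fin m₂) (𝓞 K)))} := by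
  classical
  have finj : Function.Injective (algebraMap (𝓞 K) K) := IsFractionRing.injective _ _
  have hco : IsCoprime ((A₁₁.val.map (algebraMap (𝓞 K) K)).charpoly)
      ((A₂₂.val.map (algebraMap (𝓞 K) K)).charpoly) := by
    rw [Matrix.charpoly_map, Matrix.charpoly_map]
    exact coprime_of_no_common_root
      (((Matrix.charpoly_monic _).map _).ne_zero) hcommon
  have hinj₁ : ∀ X : Matrix (Fin m₁) (Fin m₂) (𝓞 K),
      A₁₁.val * X = X * A₂₂.val → X = 0 := by
    intro X hX
    have h0 := sylv_matrix_eq_zero _ _ hco (X.map (algebraMap (𝓞 K) K))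
      (by rw [← Matrix.map_mul, ← Matrix.map_mul, hX])
    exact Matrix.ext fun i j =>
      finj (by simpa [Matrix.map_apply] using congrFun (congrFun h0 i) j)
  have hinj₂ : ∀ X : Matrix (Fin m₂) (Fin m₁) (𝓞 K),
      A₂₂.val * X = X * A₁₁.val → X = 0 := by
    intro X hX
    have h0 := sylv_matrix_eq_zero _ _ hco.symm (X.map (algebraMap (𝓞 K) K))
      (by rw [← Matrix.map_mul, ← Matrix.map_mul, hX])
    exact Matrix.ext fun i j =>
      finj (by simpa [Matrix.map_apply] using congrFun (congrFun h0 i) j)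
  have sylv_apply : ∀ X : Matrix (Fin m₁) (Fin m₂) (𝓞 K),
      sylvLMap (𝓞 K) m₁ m₂ A₁₁.val A₂₂.val X = X * A₂₂.val - A₁₁.val * X := fun _ => rfl
  -- structural facts about elements of the centralizer of the block matrix
  have memdata : ∀ C : ↥(matCentralizer (Matrix.fromBlocks A₁₁.val A₁₂ 0 A₂₂.val)),
      (C : GL (Fin m₁ ⊕ Fin m₂) (𝓞 K)).val.toBlocks₂₁ = 0 ∧
      (C : GL (Fin m₁ ⊕ Fin m₂) (𝓞 K)).val.toBlocks₁₁ * A₁₁.val =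
        A₁₁.val * (C : GL (Fin m₁ ⊕ Fin m₂) (𝓞 K)).val.toBlocks₁₁ ∧
      (C : GL (Fin m₁ ⊕ Fin m₂) (𝓞 K)).val.toBlocks₂₂ * A₂₂.val =
        A₂₂.val * (C : GL (Fin m₁ ⊕ Fin m₂) (𝓞 K)).val.toBlocks₂₂ ∧
      (C : GL (Fin m₁ ⊕ Fin m₂) (𝓞 K)).val.toBlocks₁₁ * A₁₂ +
        (C : GL (Fin m₁ ⊕ Fin m₂) (𝓞 K)).val.toBlocks₁₂ * A₂₂.val =
        A₁₁.val * (C : GL (Fin m₁ ⊕ Fin m₂) (𝓞 K)).val.toBlocks₁₂ +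
        A₁₂ * (C : GL (Fin m₁ ⊕ Fin m₂) (𝓞 K)).val.toBlocks₂₂ :=
    fun C => centralizer_blocks A₁₁.val A₂₂.val A₁₂ hinj₂ _ C.property
  have invdata : ∀ C : ↥(matCentralizer (Matrix.fromBlocks A₁₁.val A₁₂ 0 A₂₂.val)),
      (C : GL (Fin m₁ ⊕ Fin m₂) (𝓞 K)).val.toBlocks₁₁ *
        ((C : GL (Fin m₁ ⊕ Fin m₂) (𝓞 K))⁻¹).val.toBlocks₁₁ = 1 ∧
      ((C : GL (Fin m₁ ⊕ Fin m₂) (𝓞 K))⁻¹).val.toBlocks₁₁ *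
        (C : GL (Fin m₁ ⊕ Fin m₂) (𝓞 K)).val.toBlocks₁₁ = 1 ∧
      (C : GL (Fin m₁ ⊕ Fin m₂) (𝓞 K)).val.toBlocks₂₂ *
        ((C : GL (Fin m₁ ⊕ Fin m₂) (𝓞 K))⁻¹).val.toBlocks₂₂ = 1 ∧
      ((C : GL (Fin m₁ ⊕ Fin m₂) (𝓞 K))⁻¹).val.toBlocks₂₂ *
        (C : GL (Fin m₁ ⊕ Fin m₂) (𝓞 K)).val.toBlocks₂₂ = 1 := by
    intro C
    have hCz := (memdata C).1
    have hDz := (memdata C⁻¹).1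
    have h1 := blockUnit_aux _ _ ((C : GL (Fin m₁ ⊕ Fin m₂) (𝓞 K)).mul_inv) hCz hDz
    have h2 := blockUnit_aux _ _ ((C : GL (Fin m₁ ⊕ Fin m₂) (𝓞 K)).inv_mul) hDz hCz
    exact ⟨h1.1, h2.1, h1.2, h2.2⟩
  let f : ↥(matCentralizer (Matrix.fromBlocks A₁₁.val A₁₂ 0 A₂₂.val)) →
      ↥((matCentralizer A₁₁.val).prod (matCentralizer A₂₂.val)) := fun C =>
    ⟨(⟨(C : GL (Fin m₁ ⊕ Fin m₂) (𝓞 K)).val.toBlocks₁₁,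
        ((C : GL (Fin m₁ ⊕ Fin m₂) (𝓞 K))⁻¹).val.toBlocks₁₁,
        (invdata C).1, (invdata C).2.1⟩,
      ⟨(C : GL (Fin m₁ ⊕ Fin m₂) (𝓞 K)).val.toBlocks₂₂,
        ((C : GL (Fin m₁ ⊕ Fin m₂) (𝓞 K))⁻¹).val.toBlocks₂₂,
        (invdata C).2.2.1, (invdata C).2.2.2⟩),
      Subgroup.mem_prod.mpr ⟨(memdata C).2.1, (memdata C).2.2.1⟩⟩
  have hfmul : ∀ C D, f (C * D) = f C * f D := by
    intro C D
    refine Subtype.ext (Prod.ext (Units.ext ?_) (Units.ext ?_))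
    · show ((C : GL (Fin m₁ ⊕ Fin m₂) (𝓞 K)).val *
          (D : GL (Fin m₁ ⊕ Fin m₂) (𝓞 K)).val).toBlocks₁₁ = _
      rw [toBlocks₁₁_mul, (memdata D).1, Matrix.mul_zero, add_zero]
      rfl
    · show ((C : GL (Fin m₁ ⊕ Fin m₂) (𝓞 K)).val *
          (D : GL (Fin m₁ ⊕ Fin m₂) (𝓞 K)).val).toBlocks₂₂ = _
      rw [toBlocks₂₂_mul, (memdata C).1, Matrix.zero_mul, zero_add]
      rfl
  let φ := MonoidHom.mk' f hfmul
  -- injectivity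
  have hinj : Function.Injective φ := by
    intro C D h
    have h1 : (C : GL (Fin m₁ ⊕ Fin m₂) (𝓞 K)).val.toBlocks₁₁ =
        (D : GL (Fin m₁ ⊕ Fin m₂) (𝓞 K)).val.toBlocks₁₁ :=
      congrArg (fun p => (p.val.1.val :
        Matrix (Fin m₁) (Fin m₁) (𝓞 K))) h
    have h2 : (C : GL (Fin m₁ ⊕ Fin m₂) (𝓞 K)).val.toBlocks₂₂ =
        (D : GL (Fin m₁ ⊕ Fin m₂) (𝓞 K)).val.toBlocks₂₂ :=
      congrArg (fun p => (p.val.2.val :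
        Matrix (Fin m₂) (Fin m₂) (𝓞 K))) h
    have eC := (memdata C).2.2.2
    have eD := (memdata D).2.2.2
    rw [h1, h2] at eC
    have h5 := congrArg₂ (fun x y => x - y) eC eD
    simp only [add_sub_add_left_eq_sub, add_sub_add_right_eq_sub] at h5
    have hs : A₁₁.val * ((C : GL (Fin m₁ ⊕ Fin m₂) (𝓞 K)).val.toBlocks₁₂ -
          (D : GL (Fin m₁ ⊕ Fin m₂) (𝓞 K)).val.toBlocks₁₂) =
        ((C : GL (Fin m₁ ⊕ Fin m₂) (𝓞 K)).val.toBlocks₁₂ -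
          (D : GL (Fin m₁ ⊕ Fin m₂) (𝓞 K)).val.toBlocks₁₂) * A₂₂.val := by
      rw [Matrix.mul_sub, Matrix.sub_mul]
      exact h5.symm
    have h4 : (C : GL (Fin m₁ ⊕ Fin m₂) (𝓞 K)).val.toBlocks₁₂ =
        (D : GL (Fin m₁ ⊕ Fin m₂) (𝓞 K)).val.toBlocks₁₂ :=
      sub_eq_zero.mp (hinj₁ _ hs)
    apply Subtype.ext
    apply Units.ext
    conv_lhs => rw [← Matrix.fromBlocks_toBlocks (C : GL (Fin m₁ ⊕ Fin m₂) (𝓞 K)).val]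
    conv_rhs => rw [← Matrix.fromBlocks_toBlocks (D : GL (Fin m₁ ⊕ Fin m₂) (𝓞 K)).val]
    rw [h1, h2, h4, (memdata C).1, (memdata D).1]
  -- range characterization
  have hrange : ∀ p : ↥((matCentralizer A₁₁.val).prod (matCentralizer A₂₂.val)),
      p ∈ MonoidHom.range φ ↔
        (Submodule.Quotient.mk (p.val.1.val * A₁₂ * (p.val.2⁻¹).val) :
          Matrix (Fin m₁) (Fin m₂) (𝓞 K) ⧸
            LinearMap.range (sylvLMap (𝓞 K) m₁ m₂ A₁₁.val A₂₂.val)) =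
        Submodule.Quotient.mk A₁₂ := by
    intro p
    constructor
    · rintro ⟨C, rfl⟩
      have hE₂ : ((C : GL (Fin m₁ ⊕ Fin m₂) (𝓞 K))⁻¹).val.toBlocks₂₂ * A₂₂.val =
          A₂₂.val * ((C : GL (Fin m₁ ⊕ Fin m₂) (𝓞 K))⁻¹).val.toBlocks₂₂ :=
        (memdata C⁻¹).2.2.1
      have hCE := (invdata C).2.2.1
      have eC := (memdata C).2.2.2
      have c1 : ((φ C).val.1.val : Matrix (Fin m₁) (Fin m₁) (𝓞 K)) =
          (C : GL (Fin m₁ ⊕ Fin m₂) (𝓞 K)).val.toBlocks₁₁ := rfl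
      have c2 : (((φ C).val.2)⁻¹).val =
          ((C : GL (Fin m₁ ⊕ Fin m₂) (𝓞 K))⁻¹).val.toBlocks₂₂ := rfl
      rw [c1, c2, Submodule.Quotient.eq]
      refine LinearMap.mem_range.mpr
        ⟨-((C : GL (Fin m₁ ⊕ Fin m₂) (𝓞 K)).val.toBlocks₁₂ *
          ((C : GL (Fin m₁ ⊕ Fin m₂) (𝓞 K))⁻¹).val.toBlocks₂₂), ?_⟩
      have e2 : (C : GL (Fin m₁ ⊕ Fin m₂) (𝓞 K)).val.toBlocks₁₁ * A₁₂ =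
          A₁₁.val * (C : GL (Fin m₁ ⊕ Fin m₂) (𝓞 K)).val.toBlocks₁₂ +
          A₁₂ * (C : GL (Fin m₁ ⊕ Fin m₂) (𝓞 K)).val.toBlocks₂₂ -
          (C : GL (Fin m₁ ⊕ Fin m₂) (𝓞 K)).val.toBlocks₁₂ * A₂₂.val :=
        eq_sub_iff_add_eq.mpr eC
      have key : (C : GL (Fin m₁ ⊕ Fin m₂) (𝓞 K)).val.toBlocks₁₁ * A₁₂ *
          ((C : GL (Fin m₁ ⊕ Fin m₂) (𝓞 K))⁻¹).val.toBlocks₂₂ =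
          A₁₁.val * ((C : GL (Fin m₁ ⊕ Fin m₂) (𝓞 K)).val.toBlocks₁₂ *
            ((C : GL (Fin m₁ ⊕ Fin m₂) (𝓞 K))⁻¹).val.toBlocks₂₂) + A₁₂ -
          (C : GL (Fin m₁ ⊕ Fin m₂) (𝓞 K)).val.toBlocks₁₂ *
            ((C : GL (Fin m₁ ⊕ Fin m₂) (𝓞 K))⁻¹).val.toBlocks₂₂ * A₂₂.val := by
        rw [e2, Matrix.sub_mul, Matrix.add_mul,
          Matrix.mul_assoc A₁₂ _ _, hCE, Matrix.mul_one,
          Matrix.mul_assoc A₁₁.val _ _,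
          Matrix.mul_assoc _ A₂₂.val _, ← hE₂]
        simp only [Matrix.mul_assoc]
      rw [sylv_apply, key, Matrix.neg_mul, Matrix.mul_neg]
      abel
    · intro hp
      obtain ⟨Y, hY⟩ := LinearMap.mem_range.mp ((Submodule.Quotient.eq _).mp hp)
      rw [sylv_apply] at hY
      have hY' := hY
      have hm := Subgroup.mem_prod.mp p.property
      have hc1 : p.val.1.val * A₁₁.val = A₁₁.val * p.val.1.val := hm.1
      have hc2 : p.val.2.val * A₂₂.val = A₂₂.val * p.val.2.val := hm.2
      have h6 : (Y * A₂₂.val - A₁₁.val * Y) * p.val.2.val =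
          p.val.1.val * A₁₂ - A₁₂ * p.val.2.val := by
        rw [hY', Matrix.sub_mul, Matrix.mul_assoc (p.val.1.val * A₁₂) _ _,
          p.val.2.inv_mul, Matrix.mul_one]
      have h7 : p.val.1.val * A₁₂ - A₁₂ * p.val.2.val =
          A₁₁.val * (-(Y * p.val.2.val)) - (-(Y * p.val.2.val)) * A₂₂.val := by
        rw [Matrix.mul_neg, Matrix.neg_mul, sub_neg_eq_add, ← h6,
          Matrix.sub_mul, Matrix.mul_assoc Y _ _, ← hc2]
        simp only [Matrix.mul_assoc]
        abel
      have hCD : Matrix.fromBlocks p.val.1.val (-(Y * p.val.2.val)) 0 p.val.2.val *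
          Matrix.fromBlocks (p.val.1⁻¹).val
            (-((p.val.1⁻¹).val * (-(Y * p.val.2.val)) * (p.val.2⁻¹).val)) 0
            (p.val.2⁻¹).val = 1 := by
        rw [Matrix.fromBlocks_multiply, ← Matrix.fromBlocks_one]
        refine Matrix.fromBlocks_inj.mpr ⟨?_, ?_, ?_, ?_⟩
        · rw [Matrix.mul_zero, add_zero, p.val.1.mul_inv]
        · rw [Matrix.mul_neg, ← Matrix.mul_assoc, ← Matrix.mul_assoc, p.val.1.mul_inv,
            Matrix.one_mul, neg_add_cancel]
        · rw [Matrix.zero_mul, Matrix.mul_zero, add_zero]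
        · rw [Matrix.zero_mul, zero_add, p.val.2.mul_inv]
      have hDC : Matrix.fromBlocks (p.val.1⁻¹).val
            (-((p.val.1⁻¹).val * (-(Y * p.val.2.val)) * (p.val.2⁻¹).val)) 0
            (p.val.2⁻¹).val *
          Matrix.fromBlocks p.val.1.val (-(Y * p.val.2.val)) 0 p.val.2.val = 1 := by
        rw [Matrix.fromBlocks_multiply, ← Matrix.fromBlocks_one]
        refine Matrix.fromBlocks_inj.mpr ⟨?_, ?_, ?_, ?_⟩
        · rw [Matrix.mul_zero, add_zero, p.val.1.inv_mul]
        · rw [Matrix.neg_mul, Matrix.mul_assoc _ (p.val.2⁻¹).val _, p.val.2.inv_mul,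
            Matrix.mul_one, add_neg_cancel]
        · rw [Matrix.zero_mul, Matrix.mul_zero, add_zero]
        · rw [Matrix.zero_mul, zero_add, p.val.2.inv_mul]
      have hmem : (⟨_, _, hCD, hDC⟩ : GL (Fin m₁ ⊕ Fin m₂) (𝓞 K)) ∈
          matCentralizer (Matrix.fromBlocks A₁₁.val A₁₂ 0 A₂₂.val) := by
        show Matrix.fromBlocks p.val.1.val (-(Y * p.val.2.val)) 0 p.val.2.val *
            Matrix.fromBlocks A₁₁.val A₁₂ 0 A₂₂.val =
          Matrix.fromBlocks A₁₁.val A₁₂ 0 A₂₂.val *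
            Matrix.fromBlocks p.val.1.val (-(Y * p.val.2.val)) 0 p.val.2.val
        rw [Matrix.fromBlocks_multiply, Matrix.fromBlocks_multiply]
        refine Matrix.fromBlocks_inj.mpr ⟨?_, ?_, ?_, ?_⟩
        · rw [Matrix.mul_zero, add_zero, Matrix.mul_zero, add_zero]
          exact hc1
        · exact sub_eq_sub_iff_add_eq_add.mp h7
        · rw [Matrix.zero_mul, Matrix.mul_zero, add_zero, Matrix.zero_mul, Matrix.mul_zero,
            add_zero]
        · rw [Matrix.zero_mul, zero_add, Matrix.zero_mul, zero_add]
          exact hc2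
      refine ⟨⟨_, hmem⟩, ?_⟩
      refine Subtype.ext (Prod.ext (Units.ext ?_) (Units.ext ?_))
      · exact Matrix.toBlocks_fromBlocks₁₁ _ _ _ _
      · exact Matrix.toBlocks_fromBlocks₂₂ _ _ _ _
  -- the action on the quotient and orbit-stabilizer
  letI smulInst : SMul (↥((matCentralizer A₁₁.val).prod (matCentralizer A₂₂.val)))
      (Matrix (Fin m₁) (Fin m₂) (𝓞 K) ⧸
        LinearMap.range (sylvLMap (𝓞 K) m₁ m₂ A₁₁.val A₂₂.val)) :=
    ⟨fun p q => Submodule.mapQ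
      (LinearMap.range (sylvLMap (𝓞 K) m₁ m₂ A₁₁.val A₂₂.val))
      (LinearMap.range (sylvLMap (𝓞 K) m₁ m₂ A₁₁.val A₂₂.val))
      (conjLMap (𝓞 K) m₁ m₂ p.val.1.val (p.val.2⁻¹).val)
      (fun M hM => Submodule.mem_comap.mpr (conj_mem_range (Subgroup.mem_prod.mp p.property).1
        ((matCentralizer A₂₂.val).inv_mem (Subgroup.mem_prod.mp p.property).2) hM)) q⟩
  have smul_mk : ∀ (p : ↥((matCentralizer A₁₁.val).prod (matCentralizer A₂₂.val)))
      (M : Matrix (Fin m₁) (Fin m₂) (𝓞 K)),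
      p • (Submodule.Quotient.mk M : Matrix (Fin m₁) (Fin m₂) (𝓞 K) ⧸
          LinearMap.range (sylvLMap (𝓞 K) m₁ m₂ A₁₁.val A₂₂.val)) =
      Submodule.Quotient.mk (p.val.1.val * M * (p.val.2⁻¹).val) := by
    intro p M
    show Submodule.mapQ _ _ _ _ _ = _
    rw [Submodule.mapQ_apply]
    rfl
  letI : MulAction (↥((matCentralizer A₁₁.val).prod (matCentralizer A₂₂.val)))
      (Matrix (Fin m₁) (Fin m₂) (𝓞 K) ⧸
        LinearMap.range (sylvLMap (𝓞 K) m₁ m₂ A₁₁.val A₂₂.val)) :=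
    { one_smul := fun q => by
        obtain ⟨M, rfl⟩ := Submodule.Quotient.mk_surjective _ q
        rw [smul_mk]
        simp
      mul_smul := fun p p' q => by
        obtain ⟨M, rfl⟩ := Submodule.Quotient.mk_surjective _ q
        rw [smul_mk, smul_mk, smul_mk]
        congr 1
        simp [mul_inv_rev, Matrix.mul_assoc] }
  have hstab : MonoidHom.range φ = MulAction.stabilizer
      (↥((matCentralizer A₁₁.val).prod (matCentralizer A₂₂.val)))
      (Submodule.Quotient.mk A₁₂ : Matrix (Fin m₁) (Fin m₂) (𝓞 K) ⧸
        LinearMap.range (sylvLMap (𝓞 K) m₁ m₂ A₁₁.val A₂₂.val)) := by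
    ext p
    rw [MulAction.mem_stabilizer_iff, smul_mk]
    exact hrange p
  have horb : ∀ q : Matrix (Fin m₁) (Fin m₂) (𝓞 K) ⧸
      LinearMap.range (sylvLMap (𝓞 K) m₁ m₂ A₁₁.val A₂₂.val),
      q ∈ MulAction.orbit (↥((matCentralizer A₁₁.val).prod (matCentralizer A₂₂.val)))
        (Submodule.Quotient.mk A₁₂ : Matrix (Fin m₁) (Fin m₂) (𝓞 K) ⧸
          LinearMap.range (sylvLMap (𝓞 K) m₁ m₂ A₁₁.val A₂₂.val)) ↔
      ∃ (B₁₁ : GL (Fin m₁) (𝓞 K)) (B₂₂ : GL (Fin m₂) (𝓞 K)),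
        B₁₁ ∈ matCentralizer A₁₁.val ∧ B₂₂ ∈ matCentralizer A₂₂.val ∧
        q = Submodule.Quotient.mk (B₁₁.val * A₁₂ * (B₂₂⁻¹).val) := by
    intro q
    rw [MulAction.mem_orbit_iff]
    constructor
    · rintro ⟨p, rfl⟩
      exact ⟨p.val.1, p.val.2, (Subgroup.mem_prod.mp p.property).1,
        (Subgroup.mem_prod.mp p.property).2, smul_mk p A₁₂⟩
    · rintro ⟨B₁, B₂, hB1, hB2, rfl⟩
      exact ⟨⟨(B₁, B₂), Subgroup.mem_prod.mpr ⟨hB1, hB2⟩⟩, smul_mk _ _⟩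
  have hindex : (MonoidHom.range φ).index =
      Nat.card {q : Matrix (Fin m₁) (Fin m₂) (𝓞 K) ⧸
          LinearMap.range (sylvLMap (𝓞 K) m₁ m₂ A₁₁.val A₂₂.val) //
        ∃ (B₁₁ : GL (Fin m₁) (𝓞 K)) (B₂₂ : GL (Fin m₂) (𝓞 K)),
          B₁₁ ∈ matCentralizer A₁₁.val ∧ B₂₂ ∈ matCentralizer A₂₂.val ∧
          q = Submodule.Quotient.mk (B₁₁.val * A₁₂ * (B₂₂⁻¹).val)} := by
    rw [hstab, MulAction.index_stabilizer, ← Nat.card_coe_set_eq]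
    exact Nat.card_congr (Equiv.subtypeEquivRight horb)
  exact ⟨φ, fun C => ⟨rfl, rfl⟩, hinj, hrange, hindex⟩
end

section
/- Every element of finite order in GL_2(ℤ) is conjugate in GL_2(ℤ) to exactly one of the following seven matrices: the identity I₂; −I₂; diag(1,−1); [[1,1],[0,−1]]; T₃ = [[0,1],[−1,−1]]; T₆ = [[0,−1],[1,1]]; and T₄ = [[0,1],[−1,0]]. In particular, no two distinct matrices in this list are conjugate in GL_2(ℤ). -/
/-!
A torsion element `A` of `GL₂(ℤ)` has `det A = ±1`. Its square has determinant `1` and finite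
order, so `tr (A²) = (tr A)² - 2 det A ≤ 2`: a determinant-one matrix of trace `> 2` has powers of
strictly increasing trace. Hence either `det A = 1` and `|tr A| ≤ 2`, or `det A = -1` and
`tr A = 0`. Trace `±2` forces `A = ±1`, since a unipotent matrix of finite order over `ℤ` is
trivial. Otherwise, conjugating `[[a, b], [c, d]]` by shears and by `[[0, 1], [-1, 0]]` reaches a
matrix with `|d - a| ≤ c ≤ |b|` (or `c = 0`), and the determinant and trace leave only the listed
representatives. Distinct representatives have different determinant or trace, except
`diag(1, -1)` and `[[1, 1], [0, -1]]`, which differ modulo `2`.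
-/

open Matrix

theorem isConj_iff_exists_units_mul_mul_inv {M : Type*} [Monoid M] {a b : M} :
    IsConj a b ↔ ∃ u : Mˣ, ↑u * a * ↑u⁻¹ = b :=
  exists_congr fun u => (Units.mul_inv_eq_iff_eq_mul u).symm

theorem IsOfFinOrder.neg {M : Type*} [Monoid M] [HasDistribNeg M] {x : M} (hx : IsOfFinOrder x) :
    IsOfFinOrder (-x) := by
  obtain ⟨n, hn, hxn⟩ := isOfFinOrder_iff_pow_eq_one.1 hx
  exact isOfFinOrder_iff_pow_eq_one.2
    ⟨2 * n, by omega, by rw [pow_mul, neg_sq, ← pow_mul, pow_mul', hxn, one_pow]⟩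

namespace Matrix

section CommRing

variable {n R : Type*} [Fintype n] [DecidableEq n] [CommRing R]

theorem IsConj.det_eq {A B : Matrix n n R} (h : IsConj A B) : A.det = B.det := by
  obtain ⟨u, rfl⟩ := isConj_iff_exists_units_mul_mul_inv.1 h
  exact (det_units_conj u A).symm

theorem IsConj.trace_eq {A B : Matrix n n R} (h : IsConj A B) : A.trace = B.trace := by
  obtain ⟨u, rfl⟩ := isConj_iff_exists_units_mul_mul_inv.1 h
  exact (trace_units_conj u A).symm

theorem isConj_of_mul_eq_mul {P A B : Matrix n n R} (hP : IsUnit P.det) (h : P * A = B * P) :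
    IsConj A B :=
  ⟨((isUnit_iff_isUnit_det P).2 hP).unit, h⟩

theorem isConj_fin_two_shear (k a b c d : R) :
    IsConj !![a, b; c, d] !![a + k * c, b - k * (a - d) - k ^ 2 * c; c, d - k * c] :=
  isConj_of_mul_eq_mul (P := !![1, k; 0, 1]) (by simp [det_fin_two_of])
    (by ext i j; fin_cases i <;> fin_cases j <;> simp <;> ring)

theorem isConj_fin_two_swap (a b c d : R) : IsConj !![a, b; c, d] !![d, -c; -b, a] :=
  isConj_of_mul_eq_mul (P := !![0, 1; -1, 0]) (by simp [det_fin_two_of])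
    (by ext i j; fin_cases i <;> fin_cases j <;> simp)

theorem isConj_fin_two_neg_offDiag (a b c d : R) : IsConj !![a, b; c, d] !![a, -b; -c, d] :=
  isConj_of_mul_eq_mul (P := !![1, 0; 0, -1]) (by simp [det_fin_two_of])
    (by ext i j; fin_cases i <;> fin_cases j <;> simp)

theorem sq_eq_trace_smul_sub_det_smul_one (M : Matrix (Fin 2) (Fin 2) R) :
    M ^ 2 = M.trace • M - M.det • 1 := by
  ext i j
  fin_cases i <;> fin_cases j <;>
    simp [sq, mul_apply, trace_fin_two, det_fin_two] <;> ring

theorem trace_sq_fin_two (M : Matrix (Fin 2) (Fin 2) R) :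
    (M ^ 2).trace = M.trace ^ 2 - 2 * M.det := by
  rw [sq_eq_trace_smul_sub_det_smul_one, trace_sub, trace_smul, trace_smul, trace_one]
  simp [sq]
  ring

theorem trace_pow_add_two (M : Matrix (Fin 2) (Fin 2) R) (k : ℕ) :
    (M ^ (k + 2)).trace = M.trace * (M ^ (k + 1)).trace - M.det * (M ^ k).trace := by
  rw [pow_add, sq_eq_trace_smul_sub_det_smul_one, mul_sub, mul_smul_comm, mul_smul_comm,
    mul_one, ← pow_succ, trace_sub, trace_smul, trace_smul, smul_eq_mul, smul_eq_mul]

end CommRing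

section OrderedRing

variable {R : Type*} [CommRing R] [LinearOrder R] [IsStrictOrderedRing R]

theorem trace_le_two_of_isOfFinOrder {M : Matrix (Fin 2) (Fin 2) R} (hM : IsOfFinOrder M)
    (hdet : M.det = 1) : M.trace ≤ 2 := by
  obtain ⟨n, hn, hMn⟩ := isOfFinOrder_iff_pow_eq_one.1 hM
  by_contra! ht
  have growth : ∀ k : ℕ, 2 ≤ (M ^ k).trace ∧ (M ^ k).trace < (M ^ (k + 1)).trace := by
    intro k
    induction k with
    | zero => simpa using ht
    | succ k ih =>
      have hrec := trace_pow_add_two M k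
      rw [hdet, one_mul] at hrec
      exact ⟨by linarith [ih.1, ih.2], by nlinarith [ih.1, ih.2]⟩
  obtain ⟨k, rfl⟩ := Nat.exists_eq_succ_of_ne_zero hn.ne'
  obtain ⟨h_two, h_lt⟩ := growth k
  simp only [hMn, trace_one, Fintype.card_fin, Nat.cast_ofNat] at h_lt
  linarith

theorem sq_trace_le_four_of_isOfFinOrder {M : Matrix (Fin 2) (Fin 2) R} (hM : IsOfFinOrder M)
    (hdet : M.det = 1) : M.trace ^ 2 ≤ 4 := by
  have := trace_le_two_of_isOfFinOrder hM.pow (by rw [det_pow, hdet, one_pow] : (M ^ 2).det = 1)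
  rw [trace_sq_fin_two, hdet] at this
  linarith

theorem trace_eq_zero_of_isOfFinOrder {M : Matrix (Fin 2) (Fin 2) R} (hM : IsOfFinOrder M)
    (hdet : M.det = -1) : M.trace = 0 := by
  have := trace_le_two_of_isOfFinOrder hM.pow (by rw [det_pow, hdet]; norm_num : (M ^ 2).det = 1)
  rw [trace_sq_fin_two, hdet] at this
  exact pow_eq_zero_iff two_ne_zero |>.1 (le_antisymm (by linarith) (sq_nonneg _))

end OrderedRing

section TorsionFree

variable {R : Type*} [CommRing R] [IsAddTorsionFree R]

theorem eq_one_of_isOfFinOrder_of_trace_eq_two {M : Matrix (Fin 2) (Fin 2) R}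
    (hM : IsOfFinOrder M) (hdet : M.det = 1) (htr : M.trace = 2) : M = 1 := by
  obtain ⟨n, hn, hMn⟩ := isOfFinOrder_iff_pow_eq_one.1 hM
  have hN : (M - 1) ^ 2 = 0 := by
    rw [show (M - 1) ^ 2 = M ^ 2 - 2 • M + 1 by noncomm_ring, sq_eq_trace_smul_sub_det_smul_one,
      htr, hdet]
    module
  have hpow : ∀ k : ℕ, M ^ k = 1 + k • (M - 1) := by
    intro k
    induction k with
    | zero => simp
    | succ k ih =>
      calc M ^ k * M = (1 + k • (M - 1)) * (1 + (M - 1)) := by rw [ih, add_sub_cancel]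
        _ = 1 + (k + 1) • (M - 1) := by
          rw [mul_add, mul_one, add_mul, one_mul, smul_mul_assoc, ← sq, hN, smul_zero, add_zero,
            succ_nsmul]
          abel
  have hn' : n • (M - 1) = 0 := by simpa [hMn] using hpow n
  ext i j
  have hij := congrFun (congrFun hn' i) j
  rwa [smul_apply, zero_apply, nsmul_eq_zero_iff_right hn.ne', sub_apply, sub_eq_zero] at hij

end TorsionFree

theorem exists_isConj_abs_sub_le {a b c d : ℤ} (hc : 0 < c) :
    ∃ a' b' d', IsConj !![a, b; c, d] !![a', b'; c, d'] ∧ |d' - a'| ≤ c := by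
  set k := (d - a + c) / (2 * c)
  have hdiv := Int.mul_ediv_add_emod (d - a + c) (2 * c)
  have hlo := Int.emod_nonneg (d - a + c) (by omega : 2 * c ≠ 0)
  have hhi := Int.emod_lt_of_pos (d - a + c) (by omega : 0 < 2 * c)
  refine ⟨_, _, _, isConj_fin_two_shear k a b c d, abs_le.2 ⟨?_, ?_⟩⟩ <;> linarith

/-- Shear until `|d - a| ≤ c`; if then `|b| < c`, swap `b` and `c` and start over with a smaller
`|c|`. -/
theorem exists_isConj_reduced (A : Matrix (Fin 2) (Fin 2) ℤ) :
    ∃ a b c d : ℤ, IsConj A !![a, b; c, d] ∧ 0 ≤ c ∧ (c = 0 ∨ |d - a| ≤ c ∧ c ≤ |b|) := by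
  suffices key : ∀ n : ℕ, ∀ a b c d : ℤ, c.natAbs = n →
      ∃ a' b' c' d' : ℤ, IsConj !![a, b; c, d] !![a', b'; c', d'] ∧ 0 ≤ c' ∧
        (c' = 0 ∨ |d' - a'| ≤ c' ∧ c' ≤ |b'|) by
    rw [eta_fin_two A]
    exact key _ _ _ _ _ rfl
  intro n
  induction n using Nat.strong_induction_on with
  | _ n ih =>
  intro a b c d hn
  obtain rfl | hc := eq_or_ne c 0
  · exact ⟨a, b, 0, d, IsConj.refl _, le_rfl, Or.inl rfl⟩
  obtain ⟨b₁, h_abs⟩ : ∃ b₁, IsConj !![a, b; c, d] !![a, b₁; |c|, d] := by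
    rcases le_or_gt 0 c with h | h
    · exact ⟨b, by rw [abs_of_nonneg h]⟩
    · exact ⟨-b, by simpa [abs_of_neg h] using isConj_fin_two_neg_offDiag a b c d⟩
  obtain ⟨a₂, b₂, d₂, h_shear, h_diag⟩ := exists_isConj_abs_sub_le (a := a) (b := b₁) (d := d)
    (abs_pos.2 hc)
  have h₂ := h_abs.trans h_shear
  rcases le_or_gt |c| |b₂| with hcb | hbc
  · exact ⟨a₂, b₂, |c|, d₂, h₂, abs_nonneg c, Or.inr ⟨h_diag, hcb⟩⟩
  · obtain ⟨a', b', c', d', h', hred⟩ :=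
      ih (-b₂).natAbs (by rw [← hn]; zify; rwa [abs_neg]) d₂ (-|c|) (-b₂) a₂ rfl
    exact ⟨a', b', c', d', h₂.trans ((isConj_fin_two_swap a₂ b₂ |c| d₂).trans h'), hred⟩

theorem isConj_companion_of_det_eq_one {A : Matrix (Fin 2) (Fin 2) ℤ} (hdet : A.det = 1)
    (htr : A.trace ^ 2 < 4) : IsConj A !![0, -1; 1, A.trace] := by
  obtain ⟨a, b, c, d, hA, hc, hred⟩ := exists_isConj_reduced A
  rw [hA.det_eq, det_fin_two_of] at hdet
  rw [hA.trace_eq, trace_fin_two_of] at htr ⊢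
  refine hA.trans ?_
  have hc0 : c ≠ 0 := by
    rintro rfl
    nlinarith [sq_nonneg (a - d)]
  obtain ⟨had, hcb⟩ := hred.resolve_left hc0
  have hb : b < 0 := by nlinarith [sq_nonneg (a - d), lt_of_le_of_ne hc (Ne.symm hc0)]
  rw [abs_of_neg hb] at hcb
  have had2 : (d - a) ^ 2 ≤ c ^ 2 := sq_le_sq' (abs_le.1 had).1 (abs_le.1 had).2
  -- `c² ≤ -bc` and `-4bc = (d - a)² + 4 - (a + d)² ≤ c² + 4`
  obtain rfl : c = 1 := by nlinarith
  obtain rfl : b = -1 := by nlinarith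
  rcases mul_eq_zero.1 (by linarith : a * d = 0) with rfl | rfl
  · rw [zero_add]
  · simpa using isConj_fin_two_swap a (-1) 1 0

theorem isConj_upperTriangular_emod (a b d : ℤ) :
    IsConj !![a, b; 0, d] !![a, b % (a - d); 0, d] := by
  simpa [Int.emod_def, mul_comm (a - d)] using isConj_fin_two_shear (b / (a - d)) a b 0 d

theorem isConj_of_det_eq_neg_one_of_trace_eq_zero {A : Matrix (Fin 2) (Fin 2) ℤ}
    (hdet : A.det = -1) (htr : A.trace = 0) :
    IsConj A !![1, 0; 0, -1] ∨ IsConj A !![1, 1; 0, -1] := by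
  obtain ⟨a, b, c, d, hA, hc, hred⟩ := exists_isConj_reduced A
  rw [hA.det_eq, det_fin_two_of] at hdet
  rw [hA.trace_eq, trace_fin_two_of] at htr
  obtain rfl : d = -a := by linarith
  rcases hred with rfl | ⟨had, hcb⟩
  · have hb := Int.emod_two_eq_zero_or_one b
    obtain rfl | rfl := sq_eq_one_iff.1 (by linarith : a ^ 2 = 1)
    · have h := isConj_upperTriangular_emod 1 b (-1)
      norm_num at h
      rcases hb with hb | hb <;> rw [hb] at h
      exacts [Or.inl (hA.trans h), Or.inr (hA.trans h)]
    · have h := isConj_upperTriangular_emod (-1) b 1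
      norm_num [Int.emod_neg] at h
      rcases hb with hb | hb <;> rw [hb] at h
      · exact Or.inl ((hA.trans h).trans (by simpa using isConj_fin_two_swap (-1 : ℤ) 0 0 1))
      · exact Or.inr ((hA.trans h).trans
          (isConj_of_mul_eq_mul (P := !![1, 0; -2, 1]) (by simp [det_fin_two_of]) (by decide)))
  · have h_diag : (-a - a) ^ 2 ≤ c ^ 2 := sq_le_sq' (abs_le.1 had).1 (abs_le.1 had).2
    have h_off : c ^ 2 ≤ |a ^ 2 - 1| := by
      rw [show a ^ 2 - 1 = -(b * c) by linarith, abs_neg, abs_mul, abs_of_nonneg hc, sq]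
      exact mul_le_mul_of_nonneg_right hcb hc
    obtain rfl : a = 0 := by
      by_contra ha
      have ha1 : 1 ≤ a ^ 2 := by nlinarith [sq_pos_of_ne_zero ha]
      rw [abs_of_nonneg (by linarith)] at h_off
      nlinarith
    obtain rfl : c = 1 := Int.eq_one_of_mul_eq_one_left hc (by linarith : b * c = 1)
    obtain rfl : b = 1 := by linarith
    refine Or.inr (hA.trans ?_)
    exact isConj_of_mul_eq_mul (P := !![-1, 0; 1, -1]) (by simp [det_fin_two_of]) (by decide)

theorem not_isConj_diag_one_neg_one_upperTriangular :
    ¬ IsConj (!![1, 0; 0, -1] : Matrix (Fin 2) (Fin 2) ℤ) !![1, 1; 0, -1] := by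
  intro h
  set f : Matrix (Fin 2) (Fin 2) ℤ →* Matrix (Fin 2) (Fin 2) (ZMod 2) :=
    (Int.castRingHom (ZMod 2)).mapMatrix.toMonoidHom
  have h_mod2 := f.map_isConj h
  rw [show f !![1, 0; 0, -1] = 1 by decide, isConj_one_right] at h_mod2
  revert h_mod2
  decide

end Matrix

def torsionReps : Fin 7 → Matrix (Fin 2) (Fin 2) ℤ :=
  ![!![1, 0; 0, 1], !![-1, 0; 0, -1], !![1, 0; 0, -1], !![1, 1; 0, -1],
    !![0, 1; -1, -1], !![0, -1; 1, 1], !![0, 1; -1, 0]]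

theorem eq_of_isConj_torsionReps {i j : Fin 7} (h : IsConj (torsionReps i) (torsionReps j)) :
    i = j := by
  have hdet := h.det_eq
  have htr := h.trace_eq
  fin_cases i <;> fin_cases j <;>
    simp [torsionReps, det_fin_two_of, trace_fin_two_of] at hdet htr ⊢
  exacts [not_isConj_diag_one_neg_one_upperTriangular h,
    not_isConj_diag_one_neg_one_upperTriangular h.symm]

theorem exists_isConj_torsionReps {A : Matrix (Fin 2) (Fin 2) ℤ} (hA : IsOfFinOrder A) :
    ∃ i, IsConj A (torsionReps i) := by
  rcases Int.isUnit_iff.1 ((isUnit_iff_isUnit_det A).1 hA.isUnit) with hdet | hdet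
  · have h4 := sq_trace_le_four_of_isOfFinOrder hA hdet
    have h_lo : -2 ≤ A.trace := by nlinarith
    have h_hi : A.trace ≤ 2 := by nlinarith
    have hcomp := isConj_companion_of_det_eq_one hdet
    interval_cases ht : A.trace
    · have h := eq_one_of_isOfFinOrder_of_trace_eq_two hA.neg
        (by rw [det_neg, hdet]; norm_num) (by rw [trace_neg, ht]; norm_num)
      refine ⟨1, ?_⟩
      rw [neg_eq_iff_eq_neg.1 h, show torsionReps 1 = -1 by decide]
    · exact ⟨4, (hcomp (by norm_num)).trans (isConj_fin_two_neg_offDiag 0 (-1) 1 (-1))⟩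
    · exact ⟨6, (hcomp (by norm_num)).trans (isConj_fin_two_neg_offDiag 0 (-1) 1 0)⟩
    · exact ⟨5, hcomp (by norm_num)⟩
    · refine ⟨0, ?_⟩
      rw [eq_one_of_isOfFinOrder_of_trace_eq_two hA hdet ht, show torsionReps 0 = 1 by decide]
  · rcases isConj_of_det_eq_neg_one_of_trace_eq_zero hdet (trace_eq_zero_of_isOfFinOrder hA hdet)
      with h | h
    exacts [⟨2, h⟩, ⟨3, h⟩]

/-- **Torsion elements of `GL₂(ℤ)` up to conjugacy.**
Every element of finite order of `GL₂(ℤ)` is conjugate in `GL₂(ℤ)` to exactly one of the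
seven matrices `I₂`, `−I₂`, `diag(1,−1)`, `[[1,1],[0,−1]]`, `T₃ = [[0,1],[−1,−1]]`,
`T₆ = [[0,−1],[1,1]]`, `T₄ = [[0,1],[−1,0]]`; in particular no two distinct matrices of
this list are conjugate in `GL₂(ℤ)`. -/
theorem torsion_classification_GL2Z
    (L : Fin 7 → Matrix (Fin 2) (Fin 2) ℤ)
    (hL : L = ![!![1, 0; 0, 1], !![-1, 0; 0, -1], !![1, 0; 0, -1], !![1, 1; 0, -1],
      !![0, 1; -1, -1], !![0, -1; 1, 1], !![0, 1; -1, 0]]) :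
    (∀ A : GL (Fin 2) ℤ, IsOfFinOrder A →
      ∃! i : Fin 7, ∃ P : GL (Fin 2) ℤ,
        (P : Matrix (Fin 2) (Fin 2) ℤ) * (A : Matrix (Fin 2) (Fin 2) ℤ) *
            ((P⁻¹ : GL (Fin 2) ℤ) : Matrix (Fin 2) (Fin 2) ℤ) = L i) ∧
    (∀ i j : Fin 7,
      (∃ P : GL (Fin 2) ℤ,
        (P : Matrix (Fin 2) (Fin 2) ℤ) * L i *
            ((P⁻¹ : GL (Fin 2) ℤ) : Matrix (Fin 2) (Fin 2) ℤ) = L j) → i = j) := by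
  obtain rfl : L = torsionReps := hL
  simp only [← isConj_iff_exists_units_mul_mul_inv]
  refine ⟨fun A hA => ?_, fun i j => eq_of_isConj_torsionReps⟩
  obtain ⟨i, hi⟩ := exists_isConj_torsionReps (Units.isOfFinOrder_val.2 hA)
  exact ⟨i, hi, fun j hj => eq_of_isConj_torsionReps (hj.symm.trans hi)⟩
end

section
/- Let N ≥ 2 and k ≥ 1 be integers with gcd(k, N) = 1, and let A ∈ GL_m(ℤ) be a matrix with A^k = I whose last row is congruent to (0, …, 0, 1) modulo N (i.e. A ∈ Γ₁(m,N)). Then 1 is an eigenvalue of A; equivalently, det(A − I) = 0, i.e. the characteristic polynomial of A vanishes at 1. -/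
/-- **Torsion elements of `Γ₁(m,N)` of order coprime to `N` have eigenvalue `1`.**
Let `N ≥ 2` and `k ≥ 1` with `gcd(k,N) = 1`, and let `A` be an integer matrix with
`A^k = 1` whose last row is congruent to `(0, …, 0, 1)` modulo `N`.  Then `1` is an
eigenvalue of `A`, i.e. `det(A − I) = 0`. -/
theorem one_is_eigenvalue_of_torsion_in_Gamma1
    (N k m : ℕ) (hN : 2 ≤ N) (hk : 1 ≤ k) (hgcd : Nat.gcd k N = 1)
    (A : Matrix (Fin (m + 1)) (Fin (m + 1)) ℤ) (hAk : A ^ k = 1)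
    (hrow : ∀ j : Fin (m + 1),
      A (Fin.last m) j ≡ (if j = Fin.last m then 1 else 0) [ZMOD (N : ℤ)]) :
    (A - 1).det = 0 := by
  by_contra hdet
  haveI : NeZero N := ⟨by omega⟩
  set f := Int.castRingHom ℚ
  set A' := f.mapMatrix A with hA'
  set S : Matrix (Fin (m + 1)) (Fin (m + 1)) ℚ := ∑ i ∈ Finset.range k, A' ^ i with hS
  have hmap : (A' - 1) = f.mapMatrix (A - 1) := by
    rw [map_sub, map_one]
  have hdet' : (A' - 1).det ≠ 0 := by
    rw [hmap, ← RingHom.map_det]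
    simpa using hdet
  have hAk' : A' ^ k = 1 := by rw [hA', ← map_pow, hAk, map_one]
  have hgeo : S * (A' - 1) = 0 := by
    rw [hS, geom_sum_mul, hAk', sub_self]
  have hu : IsUnit (A' - 1).det := isUnit_iff_ne_zero.mpr hdet'
  have hS0 : S = 0 := by
    calc S = S * ((A' - 1) * (A' - 1)⁻¹) := by
            rw [Matrix.mul_nonsing_inv _ hu, Matrix.mul_one]
      _ = (S * (A' - 1)) * (A' - 1)⁻¹ := by rw [Matrix.mul_assoc]
      _ = 0 := by rw [hgeo, Matrix.zero_mul]
  have hSZ : (∑ i ∈ Finset.range k, A ^ i) = 0 := by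
    have hmapS : f.mapMatrix (∑ i ∈ Finset.range k, A ^ i) = S := by
      rw [map_sum, hS]
      exact Finset.sum_congr rfl fun i _ => (map_pow f.mapMatrix A i)
    rw [hS0] at hmapS
    ext i j
    have h2 := congrFun (congrFun hmapS i) j
    simp only [RingHom.mapMatrix_apply, Matrix.map_apply, Matrix.zero_apply, f,
      Int.coe_castRingHom] at h2
    exact_mod_cast h2
  -- reduce mod N
  set g := Int.castRingHom (ZMod N)
  set B := g.mapMatrix A with hB
  have hrowB : ∀ j, B (Fin.last m) j = if j = Fin.last m then 1 else 0 := by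
    intro j
    have h := (ZMod.intCast_eq_intCast_iff _ _ _).mpr (hrow j)
    rw [hB]
    simp only [RingHom.mapMatrix_apply, Matrix.map_apply, g, Int.coe_castRingHom]
    rw [h]
    split <;> simp
  have hpow : ∀ i : ℕ, ∀ j, (B ^ i) (Fin.last m) j = if j = Fin.last m then 1 else 0 := by
    intro i
    induction i with
    | zero => intro j; simp [Matrix.one_apply, eq_comm]
    | succ n ih =>
      intro j
      rw [pow_succ, Matrix.mul_apply]
      have : ∀ l, (B ^ n) (Fin.last m) l * B l j
          = (if l = Fin.last m then 1 else 0) * B l j := by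
        intro l; rw [ih]
      rw [Finset.sum_congr rfl fun l _ => this l]
      simp [ite_mul, hrowB j]
  have hsum : (∑ i ∈ Finset.range k, B ^ i) (Fin.last m) (Fin.last m) = (k : ZMod N) := by
    rw [Matrix.sum_apply]
    simp [hpow]
  have hmapSZ : (∑ i ∈ Finset.range k, B ^ i) = 0 := by
    have : g.mapMatrix (∑ i ∈ Finset.range k, A ^ i) = ∑ i ∈ Finset.range k, B ^ i := by
      rw [map_sum]
      exact Finset.sum_congr rfl fun i _ => (map_pow g.mapMatrix A i)
    rw [hSZ, map_zero] at this
    exact this.symm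
  rw [hmapSZ] at hsum
  have hk0 : (k : ZMod N) = 0 := by
    simpa using hsum.symm
  have hdvd : N ∣ k := (ZMod.natCast_eq_zero_iff k N).mp hk0
  have h1 : N ∣ 1 := hgcd ▸ Nat.dvd_gcd hdvd dvd_rfl
  have := Nat.le_of_dvd one_pos h1
  omega
end
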